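/- arXiv:2004.12025 — 8 statements merged into one kernel-verified Lean document; each statement's English description precedes it below -/
import Mathlib

section
/- Let E : ℝ → ℝ and ψ : ℝ → ℋ be functions with E(0) = E₀, ψ(0) = ψ₀, satisfying the eigenvalue equation (H + λW)ψ(λ) = E(λ)·ψ(λ) for all λ ∈ [0,δ) for some δ > 0, and suppose E and ψ are differentiable at 0 from within [0,δ). Then the one-sided derivative E′(0) equals the inner product ⟨ψ₀, Wψ₀⟩ (which is a real number since W is self-adjoint). -/
/-!
Differentiating the eigenvalue equation `(H + λW) ψ(λ) = E(λ) ψ(λ)` at `λ = 0` gives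
`H ψ' + W ψ₀ = E₀ ψ' + E' ψ₀`. Pairing with `ψ₀` kills the terms in `ψ'`, because
`⟪ψ₀, H ψ'⟫ = ⟪H ψ₀, ψ'⟫ = E₀ ⟪ψ₀, ψ'⟫`, and `⟪ψ₀, ψ₀⟫ = 1` leaves `E' = ⟪ψ₀, W ψ₀⟫`.
-/

open Set

section EigenvalueBranch

variable {ℋ : Type*} [NormedAddCommGroup ℋ] [InnerProductSpace ℂ ℋ]
  {A B : ℋ →L[ℂ] ℋ} {ψ : ℝ → ℋ} {ψ' : ℋ} {s : Set ℝ} {x : ℝ}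

theorem HasDerivWithinAt.complexCLM_comp (L : ℋ →L[ℂ] ℋ) (hψ : HasDerivWithinAt ψ ψ' s x) :
    HasDerivWithinAt (fun lam => L (ψ lam)) (L ψ') s x :=
  (L.restrictScalars ℝ).hasFDerivAt.comp_hasDerivWithinAt x hψ

theorem HasDerivWithinAt.add_ofReal_smul_apply (hψ : HasDerivWithinAt ψ ψ' s x) :
    HasDerivWithinAt (fun lam : ℝ => (A + (lam : ℂ) • B) (ψ lam))
      ((A + (x : ℂ) • B) ψ' + B (ψ x)) s x := by
  have hscal : HasDerivWithinAt (fun lam : ℝ => (lam : ℂ)) 1 s x :=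
    (hasDerivWithinAt_id x s).ofReal_comp
  convert (hψ.complexCLM_comp A).add (hscal.smul (hψ.complexCLM_comp B)) using 1
  · rfl
  · rw [add_apply, smul_apply, one_smul, add_assoc]

theorem eigenvalue_branch_deriv_eq {E : ℝ → ℝ} {E' : ℝ}
    (hBranch : ∀ lam ∈ s, (A + (lam : ℂ) • B) (ψ lam) = (E lam : ℂ) • ψ lam)
    (hx : x ∈ s) (hs : UniqueDiffWithinAt ℝ s x)
    (hE : HasDerivWithinAt E E' s x) (hψ : HasDerivWithinAt ψ ψ' s x) :
    (A + (x : ℂ) • B) ψ' + B (ψ x) = (E x : ℂ) • ψ' + (E' : ℂ) • ψ x := by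
  have hR : HasDerivWithinAt (fun lam => (E lam : ℂ) • ψ lam)
      ((E x : ℂ) • ψ' + (E' : ℂ) • ψ x) s x :=
    hE.ofReal_comp.smul hψ
  exact hs.eq_deriv s hψ.add_ofReal_smul_apply (hR.congr hBranch (hBranch x hx))

end EigenvalueBranch

theorem LinearMap.IsSymmetric.eq_inner_of_add_eq_smul_add_smul {𝕜 E : Type*} [RCLike 𝕜]
    [NormedAddCommGroup E] [InnerProductSpace 𝕜 E] {A : E →ₗ[𝕜] E} (hA : A.IsSymmetric)
    {e : ℝ} {v u w : E} {c : 𝕜} (hv : ‖v‖ = 1) (hAv : A v = (e : 𝕜) • v)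
    (h : A u + w = (e : 𝕜) • u + c • v) :
    c = inner 𝕜 v w := by
  have hpair := congrArg (inner 𝕜 v) h
  have hAu : inner 𝕜 v (A u) = (e : 𝕜) * inner 𝕜 v u := by
    rw [← hA, hAv, inner_smul_left, RCLike.conj_ofReal]
  have hvv : inner 𝕜 v v = (1 : 𝕜) := by
    rw [inner_self_eq_norm_sq_to_K, hv]; norm_num
  simp only [inner_add_right, inner_smul_right, hAu, hvv] at hpair
  linear_combination -hpair

theorem stmt_0_general {ℋ : Type*} [NormedAddCommGroup ℋ] [InnerProductSpace ℂ ℋ] [CompleteSpace ℋ]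
    (H W : ℋ →L[ℂ] ℋ) (hH : IsSelfAdjoint H)
    (E₀ : ℝ) (ψ₀ : ℋ) (hψ₀ : ‖ψ₀‖ = 1) (hEig : H ψ₀ = (E₀ : ℂ) • ψ₀)
    (δ : ℝ) (hδ : 0 < δ)
    (E : ℝ → ℝ) (ψ : ℝ → ℋ) (hE0 : E 0 = E₀) (hψ0 : ψ 0 = ψ₀)
    (hBranch : ∀ lam ∈ Ico (0:ℝ) δ, (H + (lam : ℂ) • W) (ψ lam) = (E lam : ℂ) • ψ lam)
    (E' : ℝ) (hE' : HasDerivWithinAt E E' (Ico (0:ℝ) δ) 0)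
    (ψ' : ℋ) (hψ' : HasDerivWithinAt ψ ψ' (Ico (0:ℝ) δ) 0) :
    (E' : ℂ) = inner ℂ ψ₀ (W ψ₀) := by
  have h0 : (0 : ℝ) ∈ Ico 0 δ := ⟨le_rfl, hδ⟩
  have hderiv := eigenvalue_branch_deriv_eq hBranch h0 (uniqueDiffOn_Ico 0 δ 0 h0) hE' hψ'
  rw [Complex.ofReal_zero, zero_smul, add_zero, hE0, hψ0] at hderiv
  exact (ContinuousLinearMap.isSelfAdjoint_iff_isSymmetric.mp hH).eq_inner_of_add_eq_smul_add_smul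
    hψ₀ hEig hderiv

/-- First-order perturbation of an eigenvalue branch: the one-sided derivative at `0`
of the eigenvalue branch equals `⟪ψ₀, W ψ₀⟫`. -/
theorem stmt_0 {ℋ : Type*} [NormedAddCommGroup ℋ] [InnerProductSpace ℂ ℋ] [CompleteSpace ℋ]
    (H W : ℋ →L[ℂ] ℋ) (hH : IsSelfAdjoint H) (hW : IsSelfAdjoint W)
    (E₀ : ℝ) (ψ₀ : ℋ) (hψ₀ : ‖ψ₀‖ = 1) (hEig : H ψ₀ = (E₀ : ℂ) • ψ₀)
    (δ : ℝ) (hδ : 0 < δ)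
    (E : ℝ → ℝ) (ψ : ℝ → ℋ) (hE0 : E 0 = E₀) (hψ0 : ψ 0 = ψ₀)
    (hBranch : ∀ lam ∈ Ico (0:ℝ) δ, (H + (lam : ℂ) • W) (ψ lam) = (E lam : ℂ) • ψ lam)
    (E' : ℝ) (hE' : HasDerivWithinAt E E' (Ico (0:ℝ) δ) 0)
    (ψ' : ℋ) (hψ' : HasDerivWithinAt ψ ψ' (Ico (0:ℝ) δ) 0) :
    (E' : ℂ) = inner ℂ ψ₀ (W ψ₀) :=
  stmt_0_general H W hH E₀ ψ₀ hψ₀ hEig δ hδ E ψ hE0 hψ0 hBranch E' hE' ψ' hψ'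
end

section
/- Assume in addition that the eigenvalue E₀ of H is simple, i.e. every v ∈ ℋ with Hv = E₀v is a scalar multiple of ψ₀. Let E : ℝ → ℝ and ψ : ℝ → ℋ be functions with E(0) = E₀, ψ(0) = ψ₀, satisfying (H + λW)ψ(λ) = E(λ)·ψ(λ) for all λ ∈ [0,δ) for some δ > 0, and suppose E and ψ are twice differentiable on [0,δ) (one-sided derivatives at 0). Then the limit of ⟨P̄₀(Wψ₀), R(ε)(P̄₀(Wψ₀))⟩ as ε → 0⁺ exists and equals −(1/2)·E″(0), where E″(0) is the one-sided second derivative of E at 0; in particular this limit is a real number. -/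
/-!
Differentiating `(H + λW - E(λ)) ψ(λ) = 0` once and twice at `λ = 0` and pairing with `ψ₀`,
which is orthogonal to the range of the self-adjoint `T = H - E₀`, gives `P̄₀(Wψ₀) = -T u` and
`⟪u, T u⟫ = -E''(0)/2` for `u = ψ'(0)`. With `z = iε`, `R(ε) (T u) = u + z R(ε) u` and
`T R(ε) u = u + z R(ε) u`, so `⟪T u, R(ε) T u⟫ = ⟪u, T u⟫ + z ‖u‖² + z² ⟪u, R(ε) u⟫`, and the last
two terms are `O(ε)` since `ε ‖R(ε) x‖ ≤ ‖x‖` for self-adjoint `T`.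
-/

open Set Filter Topology Complex

section Calculus

variable {𝕜 𝕜' : Type*} [NontriviallyNormedField 𝕜] [NontriviallyNormedField 𝕜']
  [NormedAlgebra 𝕜 𝕜'] {E F : Type*}
  [NormedAddCommGroup E] [NormedSpace 𝕜' E] [NormedSpace 𝕜 E] [IsScalarTower 𝕜 𝕜' E]
  [NormedAddCommGroup F] [NormedSpace 𝕜' F] [NormedSpace 𝕜 F] [IsScalarTower 𝕜 𝕜' F]
  {s : Set 𝕜} {t : 𝕜}

theorem HasDerivWithinAt.eq_zero_of_eqOn_zero {f : 𝕜 → F} {f' : F}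
    (hf : HasDerivWithinAt f f' s t) (hs : UniqueDiffWithinAt 𝕜 s t) (ht : t ∈ s)
    (h : EqOn f 0 s) : f' = 0 :=
  hs.eq_deriv s hf ((hasDerivWithinAt_const t s 0).congr h (h ht))

theorem HasDerivWithinAt.clm_apply_restrictScalars {A : 𝕜 → E →L[𝕜'] F} {A' : E →L[𝕜'] F}
    {x : 𝕜 → E} {x' : E} (hA : HasDerivWithinAt A A' s t) (hx : HasDerivWithinAt x x' s t) :
    HasDerivWithinAt (fun t => A t (x t)) (A' (x t) + A t x') s t := by
  simpa using ((ContinuousLinearMap.restrictScalarsL 𝕜' E F 𝕜 𝕜).hasFDerivAt.comp_hasDerivWithinAt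
    t hA).clm_apply hx

variable {A A' : 𝕜 → E →L[𝕜'] F} {x x' : 𝕜 → E}

theorem clm_apply_deriv_eq_zero_of_eqOn_zero (hs : UniqueDiffOn 𝕜 s)
    (hA : ∀ t ∈ s, HasDerivWithinAt A (A' t) s t) (hx : ∀ t ∈ s, HasDerivWithinAt x (x' t) s t)
    (h : ∀ t ∈ s, A t (x t) = 0) (ht : t ∈ s) : A' t (x t) + A t (x' t) = 0 :=
  ((hA t ht).clm_apply_restrictScalars (hx t ht)).eq_zero_of_eqOn_zero (hs t ht) ht h

theorem clm_apply_deriv₂_eq_zero_of_eqOn_zero (hs : UniqueDiffOn 𝕜 s)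
    (hA : ∀ t ∈ s, HasDerivWithinAt A (A' t) s t) (hx : ∀ t ∈ s, HasDerivWithinAt x (x' t) s t)
    {A'' : E →L[𝕜'] F} {x'' : E} (hA' : HasDerivWithinAt A' A'' s t)
    (hx' : HasDerivWithinAt x' x'' s t) (h : ∀ t ∈ s, A t (x t) = 0) (ht : t ∈ s) :
    A'' (x t) + 2 • A' t (x' t) + A t x'' = 0 := by
  have := ((hA'.clm_apply_restrictScalars (hx t ht)).add
    ((hA t ht).clm_apply_restrictScalars hx')).eq_zero_of_eqOn_zero (hs t ht) ht
    fun t ht => clm_apply_deriv_eq_zero_of_eqOn_zero hs hA hx h ht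
  rw [← this]
  abel

end Calculus

section EigenBranch

variable {F : Type*} [NormedAddCommGroup F] [NormedSpace ℂ F] {H W : F →L[ℂ] F} {s : Set ℝ}
  {E E' : ℝ → ℝ} {ψ ψ' : ℝ → F} {t : ℝ}

theorem hasDerivWithinAt_pencil {e : ℝ} (hE : HasDerivWithinAt E e s t) :
    HasDerivWithinAt (fun t : ℝ => H + (t : ℂ) • W - (E t : ℂ) • 1) (W - (e : ℂ) • 1) s t := by
  have := (((hasDerivWithinAt_id t s).ofReal_comp.smul_const W).const_add H).sub
    (hE.ofReal_comp.smul_const (1 : F →L[ℂ] F))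
  rwa [ofReal_one, one_smul] at this

theorem pencil_apply_eq_zero (hBranch : ∀ t ∈ s, (H + (t : ℂ) • W) (ψ t) = (E t : ℂ) • ψ t) :
    ∀ t ∈ s, (H + (t : ℂ) • W - (E t : ℂ) • 1) (ψ t) = 0 := by
  intro t ht
  rw [sub_apply, hBranch t ht, smul_apply, one_apply_eq_self, sub_self]

variable (hs : UniqueDiffOn ℝ s)
  (hBranch : ∀ t ∈ s, (H + (t : ℂ) • W) (ψ t) = (E t : ℂ) • ψ t)
  (hE' : ∀ t ∈ s, HasDerivWithinAt E (E' t) s t) (hψ' : ∀ t ∈ s, HasDerivWithinAt ψ (ψ' t) s t)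
include hs hBranch hE' hψ'

theorem eigenBranch_first_order (ht : t ∈ s) :
    (W - (E' t : ℂ) • 1) (ψ t) + (H + (t : ℂ) • W - (E t : ℂ) • 1) (ψ' t) = 0 :=
  clm_apply_deriv_eq_zero_of_eqOn_zero hs (fun t ht => hasDerivWithinAt_pencil (hE' t ht)) hψ'
    (pencil_apply_eq_zero hBranch) ht

theorem eigenBranch_second_order {E'' : ℝ} {ψ'' : F} (hE'' : HasDerivWithinAt E' E'' s t)
    (hψ'' : HasDerivWithinAt ψ' ψ'' s t) (ht : t ∈ s) :
    -((E'' : ℂ) • ψ t) + 2 • (W - (E' t : ℂ) • 1) (ψ' t)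
      + (H + (t : ℂ) • W - (E t : ℂ) • 1) ψ'' = 0 := by
  have hA' : HasDerivWithinAt (fun t => W - (E' t : ℂ) • 1) (-((E'' : ℂ) • 1)) s t := by
    simpa using (hE''.ofReal_comp.smul_const (1 : F →L[ℂ] F)).const_sub W
  simpa using clm_apply_deriv₂_eq_zero_of_eqOn_zero hs
    (fun t ht => hasDerivWithinAt_pencil (hE' t ht)) hψ' hA' hψ''
    (pencil_apply_eq_zero hBranch) ht

end EigenBranch

section SelfAdjoint

variable {ℋ : Type*} [NormedAddCommGroup ℋ] [InnerProductSpace ℂ ℋ] [CompleteSpace ℋ]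
  {T : ℋ →L[ℂ] ℋ}

theorem IsSelfAdjoint.sub_ofReal_smul_one (hT : IsSelfAdjoint T) (r : ℝ) :
    IsSelfAdjoint (T - (r : ℂ) • 1) :=
  hT.sub (IsSelfAdjoint.smul (conj_ofReal r) (IsSelfAdjoint.one _))

theorem IsSelfAdjoint.inner_apply_eq_zero_of_apply_eq_zero (hT : IsSelfAdjoint T) {ψ₀ : ℋ}
    (hψ₀ : T ψ₀ = 0) (x : ℋ) : inner ℂ ψ₀ (T x) = 0 := by
  rw [← ContinuousLinearMap.adjoint_inner_left, hT.adjoint_eq, hψ₀, inner_zero_left]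

theorem IsSelfAdjoint.abs_mul_norm_le_norm_sub_I_smul (hT : IsSelfAdjoint T) (ε : ℝ) (x : ℋ) :
    |ε| * ‖x‖ ≤ ‖T x - ((ε : ℂ) * I) • x‖ := by
  have hre : re (inner ℂ (T x) (((ε : ℂ) * I) • x)) = 0 := by
    have him : im (inner ℂ (T x) x) = 0 := hT.isSymmetric.im_inner_apply_self x
    simp [him]
  have hsq : ‖T x - ((ε : ℂ) * I) • x‖ ^ 2 = ‖T x‖ ^ 2 + (|ε| * ‖x‖) ^ 2 := by
    rw [@norm_sub_sq ℂ, RCLike.re_to_complex, hre, norm_smul]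
    simp [mul_pow]
  exact abs_le_of_sq_le_sq' (by nlinarith [sq_nonneg ‖T x‖]) (norm_nonneg _) |>.2

variable {ψ₀ : ℋ}

theorem IsSelfAdjoint.apply_sub_inner_smul_eq_neg_apply (hT : IsSelfAdjoint T) (hψ₀ : ‖ψ₀‖ = 1)
    (hTψ₀ : T ψ₀ = 0) {S : ℋ →L[ℂ] ℋ} {a : ℂ} {u : ℋ} (h : (S - a • 1) ψ₀ + T u = 0) :
    S ψ₀ - inner ℂ ψ₀ (S ψ₀) • ψ₀ = -T u := by
  have ha : inner ℂ ψ₀ (S ψ₀) = a := by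
    have := congrArg (inner ℂ ψ₀) h
    simp only [sub_apply, smul_apply, one_apply_eq_self, inner_add_right, inner_sub_right,
      inner_smul_right, inner_self_eq_one_of_norm_eq_one hψ₀,
      hT.inner_apply_eq_zero_of_apply_eq_zero hTψ₀, inner_zero_right] at this
    linear_combination this
  rw [ha, ← add_eq_zero_iff_eq_neg, ← h]
  simp

theorem IsSelfAdjoint.inner_apply_self_eq_of_second_order (hT : IsSelfAdjoint T)
    (hψ₀ : ‖ψ₀‖ = 1) (hTψ₀ : T ψ₀ = 0) {S : ℋ →L[ℂ] ℋ} (hS : IsSelfAdjoint S) {c : ℂ}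
    {u v : ℋ} (h₁ : S ψ₀ + T u = 0) (h₂ : -(c • ψ₀) + 2 • S u + T v = 0) :
    inner ℂ u (T u) = -(c / 2) := by
  have hSu : inner ℂ ψ₀ (S u) = -inner ℂ u (T u) := by
    rw [← ContinuousLinearMap.adjoint_inner_left, hS.adjoint_eq, eq_neg_of_add_eq_zero_left h₁,
      inner_neg_left, ← ContinuousLinearMap.adjoint_inner_left, hT.adjoint_eq]
  have := congrArg (inner ℂ ψ₀) h₂
  simp only [two_nsmul, inner_add_right, inner_neg_right, inner_smul_right,
    inner_self_eq_one_of_norm_eq_one hψ₀, hT.inner_apply_eq_zero_of_apply_eq_zero hTψ₀, hSu,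
    inner_zero_right] at this
  linear_combination -this / 2

theorem IsSelfAdjoint.mul_norm_resolvent_apply_le (hT : IsSelfAdjoint T) {ε : ℝ} (hε : 0 < ε)
    {R : ℋ →L[ℂ] ℋ} (hR : (T - ((ε : ℂ) * I) • 1) * R = 1) (x : ℋ) : ε * ‖R x‖ ≤ ‖x‖ := by
  have hx : T (R x) - ((ε : ℂ) * I) • R x = x := by
    simpa using congrArg (fun A : ℋ →L[ℂ] ℋ => A x) hR
  simpa [abs_of_pos hε, hx] using hT.abs_mul_norm_le_norm_sub_I_smul ε (R x)

theorem IsSelfAdjoint.inner_apply_resolvent_apply (hT : IsSelfAdjoint T) {z : ℂ}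
    {R : ℋ →L[ℂ] ℋ} (hR : (T - z • 1) * R = 1 ∧ R * (T - z • 1) = 1) (u : ℋ) :
    inner ℂ (T u) (R (T u)) = inner ℂ u (T u) + z * inner ℂ u u + z ^ 2 * inner ℂ u (R u) := by
  have hRT : R (T u) = u + z • R u := by
    have := congrArg (fun A : ℋ →L[ℂ] ℋ => A u) hR.2
    simp only [mul_apply_eq_comp, sub_apply, smul_apply, one_apply_eq_self, map_sub,
      map_smul] at this
    linear_combination (norm := module) this
  have hTR : T (R u) = u + z • R u := by
    have := congrArg (fun A : ℋ →L[ℂ] ℋ => A u) hR.1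
    simp only [mul_apply_eq_comp, sub_apply, smul_apply, one_apply_eq_self] at this
    linear_combination (norm := module) this
  have hsym : ∀ x y, inner ℂ (T x) y = inner ℂ x (T y) := hT.isSymmetric
  rw [hRT, inner_add_right, inner_smul_right, hsym, hsym, hTR, inner_add_right, inner_smul_right]
  ring

theorem IsSelfAdjoint.tendsto_inner_apply_resolvent_apply (hT : IsSelfAdjoint T)
    {R : ℝ → ℋ →L[ℂ] ℋ} (hR : ∀ ε : ℝ, 0 < ε →
      (T - ((ε : ℂ) * I) • 1) * R ε = 1 ∧ R ε * (T - ((ε : ℂ) * I) • 1) = 1) (u : ℋ) :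
    Tendsto (fun ε : ℝ => inner ℂ (T u) (R ε (T u))) (𝓝[>] 0) (𝓝 (inner ℂ u (T u))) := by
  have hlin : Tendsto (fun ε : ℝ => inner ℂ u (T u) + (ε : ℂ) * I * inner ℂ u u) (𝓝[>] 0)
      (𝓝 (inner ℂ u (T u))) := by
    have : Continuous fun ε : ℝ => inner ℂ u (T u) + (ε : ℂ) * I * inner ℂ u u := by fun_prop
    simpa using (this.tendsto 0).mono_left nhdsWithin_le_nhds
  have hquad : Tendsto (fun ε : ℝ => ((ε : ℂ) * I) ^ 2 * inner ℂ u (R ε u)) (𝓝[>] 0) (𝓝 0) := by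
    refine squeeze_zero_norm' ?_ (tendsto_nhdsWithin_of_tendsto_nhds
      ((continuous_id.mul continuous_const).tendsto' 0 0 (zero_mul _)) : Tendsto
        (fun ε : ℝ => ε * ‖u‖ ^ 2) (𝓝[>] 0) (𝓝 0))
    filter_upwards [self_mem_nhdsWithin] with ε (hε : 0 < ε)
    calc ‖((ε : ℂ) * I) ^ 2 * inner ℂ u (R ε u)‖ ≤ ε * (‖u‖ * (ε * ‖R ε u‖)) := by
          rw [norm_mul, norm_pow, norm_mul, norm_I, norm_real, Real.norm_of_nonneg hε.le]
          nlinarith [norm_inner_le_norm (𝕜 := ℂ) u (R ε u), sq_nonneg ε]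
      _ ≤ ε * ‖u‖ ^ 2 := by
          have := hT.mul_norm_resolvent_apply_le hε (hR ε hε).1 u
          rw [sq]; gcongr
  have hsum := hlin.add hquad
  rw [add_zero] at hsum
  refine hsum.congr' ?_
  filter_upwards [self_mem_nhdsWithin] with ε (hε : 0 < ε)
  rw [hT.inner_apply_resolvent_apply (hR ε hε)]

end SelfAdjoint

theorem stmt_1_general {ℋ : Type*} [NormedAddCommGroup ℋ] [InnerProductSpace ℂ ℋ] [CompleteSpace ℋ]
    (H W : ℋ →L[ℂ] ℋ) (hH : IsSelfAdjoint H) (hW : IsSelfAdjoint W)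
    (E₀ : ℝ) (ψ₀ : ℋ) (hψ₀ : ‖ψ₀‖ = 1) (hEig : H ψ₀ = (E₀ : ℂ) • ψ₀)
    (R : ℝ → (ℋ →L[ℂ] ℋ))
    (hR : ∀ ε : ℝ, 0 < ε →
      (H - ((E₀ : ℂ) + (ε : ℂ) * Complex.I) • (1 : ℋ →L[ℂ] ℋ)) * R ε = 1 ∧
      R ε * (H - ((E₀ : ℂ) + (ε : ℂ) * Complex.I) • (1 : ℋ →L[ℂ] ℋ)) = 1)
    (δ : ℝ) (hδ : 0 < δ)
    (E : ℝ → ℝ) (ψ : ℝ → ℋ) (hE0 : E 0 = E₀) (hψ0 : ψ 0 = ψ₀)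
    (hBranch : ∀ lam ∈ Ico (0:ℝ) δ, (H + (lam : ℂ) • W) (ψ lam) = (E lam : ℂ) • ψ lam)
    (E' : ℝ → ℝ) (ψ' : ℝ → ℋ)
    (hE' : ∀ lam ∈ Ico (0:ℝ) δ, HasDerivWithinAt E (E' lam) (Ico (0:ℝ) δ) lam)
    (hψ' : ∀ lam ∈ Ico (0:ℝ) δ, HasDerivWithinAt ψ (ψ' lam) (Ico (0:ℝ) δ) lam)
    (E'' : ℝ → ℝ) (ψ'' : ℝ → ℋ)
    (hE'' : ∀ lam ∈ Ico (0:ℝ) δ, HasDerivWithinAt E' (E'' lam) (Ico (0:ℝ) δ) lam)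
    (hψ'' : ∀ lam ∈ Ico (0:ℝ) δ, HasDerivWithinAt ψ' (ψ'' lam) (Ico (0:ℝ) δ) lam) :
    Tendsto (fun ε : ℝ =>
        (inner ℂ (W ψ₀ - (inner ℂ ψ₀ (W ψ₀) : ℂ) • ψ₀)
          (R ε (W ψ₀ - (inner ℂ ψ₀ (W ψ₀) : ℂ) • ψ₀)) : ℂ))
      (𝓝[>] (0 : ℝ)) (𝓝 ((-(1/2) * E'' 0 : ℝ) : ℂ)) := by
  have hs : UniqueDiffOn ℝ (Ico (0:ℝ) δ) := uniqueDiffOn_Ico 0 δ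
  have h0 : (0:ℝ) ∈ Ico (0:ℝ) δ := ⟨le_rfl, hδ⟩
  set T := H - (E₀ : ℂ) • 1
  have hT : IsSelfAdjoint T := hH.sub_ofReal_smul_one E₀
  have hTψ₀ : T ψ₀ = 0 := by simp [T, hEig]
  have hpencil : H + ((0:ℝ) : ℂ) • W - (E 0 : ℂ) • 1 = T := by simp [T, hE0]
  have h₁ := eigenBranch_first_order hs hBranch hE' hψ' h0
  have h₂ := eigenBranch_second_order hs hBranch hE' hψ' (hE'' 0 h0) (hψ'' 0 h0) h0
  rw [hpencil, hψ0] at h₁ h₂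
  have hproj := hT.apply_sub_inner_smul_eq_neg_apply hψ₀ hTψ₀ h₁
  have hsecond := hT.inner_apply_self_eq_of_second_order hψ₀ hTψ₀
    (hW.sub_ofReal_smul_one (E' 0)) h₁ h₂
  have hR' : ∀ ε : ℝ, 0 < ε →
      (T - ((ε : ℂ) * I) • 1) * R ε = 1 ∧ R ε * (T - ((ε : ℂ) * I) • 1) = 1 := by
    simpa only [T, add_smul, sub_sub] using hR
  have hlim : ((-(1/2) * E'' 0 : ℝ) : ℂ) = inner ℂ (ψ' 0) (T (ψ' 0)) := by
    rw [hsecond]; push_cast; ring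
  rw [hproj, hlim]
  simpa using hT.tendsto_inner_apply_resolvent_apply hR' (ψ' 0)

/-- Fermi golden rule limit: if a twice differentiable eigenvalue branch exists through a
simple eigenvalue `E₀` of `H`, then `lim_{ε→0⁺} ⟪P̄₀(Wψ₀), R(ε) P̄₀(Wψ₀)⟫ = -(1/2) E''(0)`,
where `R(ε)` is the inverse of `H - (E₀ + iε)·Id` and `P̄₀ u = u - ⟪ψ₀, u⟫ ψ₀`. -/
theorem stmt_1 {ℋ : Type*} [NormedAddCommGroup ℋ] [InnerProductSpace ℂ ℋ] [CompleteSpace ℋ]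
    (H W : ℋ →L[ℂ] ℋ) (hH : IsSelfAdjoint H) (hW : IsSelfAdjoint W)
    (E₀ : ℝ) (ψ₀ : ℋ) (hψ₀ : ‖ψ₀‖ = 1) (hEig : H ψ₀ = (E₀ : ℂ) • ψ₀)
    (hSimple : ∀ v : ℋ, H v = (E₀ : ℂ) • v → ∃ c : ℂ, v = c • ψ₀)
    (R : ℝ → (ℋ →L[ℂ] ℋ))
    (hR : ∀ ε : ℝ, 0 < ε →
      (H - ((E₀ : ℂ) + (ε : ℂ) * Complex.I) • (1 : ℋ →L[ℂ] ℋ)) * R ε = 1 ∧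
      R ε * (H - ((E₀ : ℂ) + (ε : ℂ) * Complex.I) • (1 : ℋ →L[ℂ] ℋ)) = 1)
    (δ : ℝ) (hδ : 0 < δ)
    (E : ℝ → ℝ) (ψ : ℝ → ℋ) (hE0 : E 0 = E₀) (hψ0 : ψ 0 = ψ₀)
    (hBranch : ∀ lam ∈ Ico (0:ℝ) δ, (H + (lam : ℂ) • W) (ψ lam) = (E lam : ℂ) • ψ lam)
    (E' : ℝ → ℝ) (ψ' : ℝ → ℋ)
    (hE' : ∀ lam ∈ Ico (0:ℝ) δ, HasDerivWithinAt E (E' lam) (Ico (0:ℝ) δ) lam)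
    (hψ' : ∀ lam ∈ Ico (0:ℝ) δ, HasDerivWithinAt ψ (ψ' lam) (Ico (0:ℝ) δ) lam)
    (E'' : ℝ → ℝ) (ψ'' : ℝ → ℋ)
    (hE'' : ∀ lam ∈ Ico (0:ℝ) δ, HasDerivWithinAt E' (E'' lam) (Ico (0:ℝ) δ) lam)
    (hψ'' : ∀ lam ∈ Ico (0:ℝ) δ, HasDerivWithinAt ψ' (ψ'' lam) (Ico (0:ℝ) δ) lam) :
    Tendsto (fun ε : ℝ =>
        (inner ℂ (W ψ₀ - (inner ℂ ψ₀ (W ψ₀) : ℂ) • ψ₀)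
          (R ε (W ψ₀ - (inner ℂ ψ₀ (W ψ₀) : ℂ) • ψ₀)) : ℂ))
      (𝓝[>] (0 : ℝ)) (𝓝 ((-(1/2) * E'' 0 : ℝ) : ℂ)) :=
  stmt_1_general H W hH hW E₀ ψ₀ hψ₀ hEig R hR δ hδ E ψ hE0 hψ0 hBranch E' ψ' hE' hψ' E'' ψ'' hE''
    hψ''
end

section
/- Assume in addition that the eigenvalue E₀ of H is simple, i.e. every v ∈ ℋ with Hv = E₀v is a scalar multiple of ψ₀. Suppose there exists ℓ ∈ ℂ with nonzero imaginary part such that ⟨P̄₀(Wψ₀), R(ε)(P̄₀(Wψ₀))⟩ → ℓ as ε → 0⁺. Then for no δ > 0 do there exist functions E : ℝ → ℝ and ψ : ℝ → ℋ, twice differentiable on [0,δ) (one-sided derivatives at 0), with E(0) = E₀, ψ(0) = ψ₀ and (H + λW)ψ(λ) = E(λ)·ψ(λ) for all λ ∈ [0,δ). -/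
open Set Filter Topology Complex

/-!
Differentiating the eigenvalue equation at `λ = 0` gives `(H - E₀) u = P̄₀ W ψ₀` with
`u = -ψ'(0)`, once the Hellmann–Feynman identity `E'(0) = ⟪ψ₀, W ψ₀⟫` is used. For the symmetric
operator `T = H - E₀` one has `‖(T - iε) x‖ ≥ ε ‖x‖`, so `ε ‖R(ε)‖ ≤ 1`, and
`R(ε) (T u) = u + iε R(ε) u`. Hence `⟪T u, R(ε) T u⟫ = ⟪T u, u⟫ + O(ε)`: the limit `ℓ` equals
`⟪T u, u⟫`, which is real.
-/

namespace LinearMap.IsSymmetric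

variable {ℋ : Type*} [NormedAddCommGroup ℋ] [InnerProductSpace ℂ ℋ] {T : ℋ →L[ℂ] ℋ}

lemma norm_apply_sub_I_smul_sq (hT : (T : ℋ →ₗ[ℂ] ℋ).IsSymmetric) (ε : ℝ) (x : ℋ) :
    ‖T x - (ε * I) • x‖ ^ 2 = ‖T x‖ ^ 2 + (ε * ‖x‖) ^ 2 := by
  have hre : RCLike.re (inner ℂ (T x) ((ε * I : ℂ) • x)) = 0 := by
    simpa using Or.inr (hT.im_inner_apply_self x)
  rw [@norm_sub_sq ℂ, hre, norm_smul]
  simp [mul_pow]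

lemma mul_norm_le_norm_apply_sub_I_smul (hT : (T : ℋ →ₗ[ℂ] ℋ).IsSymmetric) (ε : ℝ) (x : ℋ) :
    ε * ‖x‖ ≤ ‖T x - (ε * I) • x‖ := by
  refine le_of_sq_le_sq ?_ (norm_nonneg _)
  rw [hT.norm_apply_sub_I_smul_sq]
  nlinarith [sq_nonneg ‖T x‖]

lemma mul_norm_resolvent_le (hT : (T : ℋ →ₗ[ℂ] ℋ).IsSymmetric) {ε : ℝ} {R : ℋ →L[ℂ] ℋ}
    (hR : (T - (ε * I) • 1) * R = 1) (y : ℋ) : ε * ‖R y‖ ≤ ‖y‖ := by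
  have hy : T (R y) - (ε * I) • R y = y := by
    simpa using congrArg (fun S : ℋ →L[ℂ] ℋ => S y) hR
  simpa [hy] using hT.mul_norm_le_norm_apply_sub_I_smul ε (R y)

lemma norm_inner_resolvent_sub_le (hT : (T : ℋ →ₗ[ℂ] ℋ).IsSymmetric) {ε : ℝ} {R : ℋ →L[ℂ] ℋ}
    (hε : 0 ≤ ε) (hRr : (T - (ε * I) • 1) * R = 1) (hRl : R * (T - (ε * I) • 1) = 1) (u : ℋ) :
    ‖inner ℂ (T u) (R (T u)) - inner ℂ (T u) u‖ ≤ 2 * ε * ‖u‖ ^ 2 := by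
  have hTR : T (R u) = u + (ε * I) • R u := by
    have h : T (R u) - (ε * I) • R u = u := by
      simpa using congrArg (fun S : ℋ →L[ℂ] ℋ => S u) hRr
    exact sub_eq_iff_eq_add.mp h
  have hRT : R (T u) = u + (ε * I) • R u := by
    have h : R (T u) - (ε * I) • R u = u := by
      simpa using congrArg (fun S : ℋ →L[ℂ] ℋ => S u) hRl
    exact sub_eq_iff_eq_add.mp h
  have hεI : ‖(ε * I : ℂ)‖ = ε := by simp [abs_of_nonneg hε]
  calc ‖inner ℂ (T u) (R (T u)) - inner ℂ (T u) u‖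
      = ε * ‖inner ℂ u u + (ε * I) * inner ℂ u (R u)‖ := by
        rw [hRT, inner_add_right, add_sub_cancel_left, inner_smul_right, hT.apply_clm, hTR,
          inner_add_right, inner_smul_right, norm_mul, hεI]
    _ ≤ ε * (‖u‖ ^ 2 + ‖u‖ * (ε * ‖R u‖)) := by
        gcongr
        refine (norm_add_le _ _).trans ?_
        rw [norm_mul, hεI, inner_self_eq_norm_sq_to_K, mul_left_comm]
        gcongr
        · simp
        · exact norm_inner_le_norm u (R u)
    _ ≤ ε * (‖u‖ ^ 2 + ‖u‖ * ‖u‖) := by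
        gcongr
        exact hT.mul_norm_resolvent_le hRr u
    _ = 2 * ε * ‖u‖ ^ 2 := by ring

lemma tendsto_inner_resolvent (hT : (T : ℋ →ₗ[ℂ] ℋ).IsSymmetric) {R : ℝ → ℋ →L[ℂ] ℋ}
    (hR : ∀ ε : ℝ, 0 < ε → (T - (ε * I) • 1) * R ε = 1 ∧ R ε * (T - (ε * I) • 1) = 1) (u : ℋ) :
    Tendsto (fun ε => inner ℂ (T u) (R ε (T u))) (𝓝[>] 0) (𝓝 (inner ℂ (T u) u)) := by
  rw [tendsto_iff_norm_sub_tendsto_zero]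
  refine squeeze_zero' (g := fun ε => 2 * ε * ‖u‖ ^ 2)
    (Eventually.of_forall fun _ => norm_nonneg _) ?_ ?_
  · filter_upwards [self_mem_nhdsWithin] with ε hε
    exact hT.norm_inner_resolvent_sub_le (le_of_lt hε) (hR ε hε).1 (hR ε hε).2 u
  · refine tendsto_nhdsWithin_of_tendsto_nhds ?_
    exact (by fun_prop : Continuous fun ε : ℝ => 2 * ε * ‖u‖ ^ 2).tendsto' 0 0 (by simp)

end LinearMap.IsSymmetric

section EigenBranch

variable {ℋ : Type*} [NormedAddCommGroup ℋ] [InnerProductSpace ℂ ℋ] {H W : ℋ →L[ℂ] ℋ}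

lemma eigen_branch_first_order {s : Set ℝ} {t e : ℝ} {E : ℝ → ℝ} {ψ : ℝ → ℋ} {v : ℋ}
    (hs : UniqueDiffWithinAt ℝ s t) (ht : t ∈ s)
    (heig : ∀ lam ∈ s, (H + (lam : ℂ) • W) (ψ lam) = (E lam : ℂ) • ψ lam)
    (hE : HasDerivWithinAt E e s t) (hψ : HasDerivWithinAt ψ v s t) :
    (H + (t : ℂ) • W) v + W (ψ t) = (E t : ℂ) • v + (e : ℂ) • ψ t := by
  have hHψ : HasDerivWithinAt (fun lam => H (ψ lam)) (H v) s t :=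
    (H.restrictScalars ℝ).hasFDerivAt.comp_hasDerivWithinAt t hψ
  have hWψ : HasDerivWithinAt (fun lam => W (ψ lam)) (W v) s t :=
    (W.restrictScalars ℝ).hasFDerivAt.comp_hasDerivWithinAt t hψ
  have hlhs : HasDerivWithinAt (fun lam : ℝ => (H + (lam : ℂ) • W) (ψ lam))
      ((H + (t : ℂ) • W) v + W (ψ t)) s t := by
    simpa [add_assoc] using hHψ.fun_add ((hasDerivWithinAt_id t s).ofReal_comp.fun_smul hWψ)
  have hrhs : HasDerivWithinAt (fun lam : ℝ => (E lam : ℂ) • ψ lam)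
      ((E t : ℂ) • v + (e : ℂ) • ψ t) s t :=
    hE.ofReal_comp.fun_smul hψ
  exact hs.eq_deriv s (hlhs.congr_of_mem (fun lam hlam => (heig lam hlam).symm) ht) hrhs

lemma hellmann_feynman (hH : (H : ℋ →ₗ[ℂ] ℋ).IsSymmetric) {E₀ e : ℝ} {ψ₀ v : ℋ}
    (hψ₀ : ‖ψ₀‖ = 1) (hEig : H ψ₀ = (E₀ : ℂ) • ψ₀)
    (hfirst : H v + W ψ₀ = (E₀ : ℂ) • v + (e : ℂ) • ψ₀) :
    inner ℂ ψ₀ (W ψ₀) = e := by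
  have hψ₀H : inner ℂ ψ₀ (H v) = E₀ * inner ℂ ψ₀ v := by
    rw [← hH.apply_clm, hEig, inner_smul_left, conj_ofReal]
  simpa [inner_add_right, inner_smul_right, hψ₀H, hψ₀] using
    congrArg (inner ℂ ψ₀) hfirst

lemma apply_neg_eq_sub_inner_smul (hH : (H : ℋ →ₗ[ℂ] ℋ).IsSymmetric) {E₀ e : ℝ} {ψ₀ v : ℋ}
    (hψ₀ : ‖ψ₀‖ = 1) (hEig : H ψ₀ = (E₀ : ℂ) • ψ₀)
    (hfirst : H v + W ψ₀ = (E₀ : ℂ) • v + (e : ℂ) • ψ₀) :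
    (H - (E₀ : ℂ) • 1) (-v) = W ψ₀ - inner ℂ ψ₀ (W ψ₀) • ψ₀ := by
  rw [hellmann_feynman hH hψ₀ hEig hfirst]
  have hHv : H v = (E₀ : ℂ) • v + (e : ℂ) • ψ₀ - W ψ₀ := eq_sub_of_add_eq hfirst
  simp [hHv]
  abel

end EigenBranch

theorem stmt_2_general {ℋ : Type*} [NormedAddCommGroup ℋ] [InnerProductSpace ℂ ℋ] [CompleteSpace ℋ]
    (H W : ℋ →L[ℂ] ℋ) (hH : IsSelfAdjoint H)
    (E₀ : ℝ) (ψ₀ : ℋ) (hψ₀ : ‖ψ₀‖ = 1) (hEig : H ψ₀ = (E₀ : ℂ) • ψ₀)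
    (R : ℝ → (ℋ →L[ℂ] ℋ))
    (hR : ∀ ε : ℝ, 0 < ε →
      (H - ((E₀ : ℂ) + (ε : ℂ) * Complex.I) • (1 : ℋ →L[ℂ] ℋ)) * R ε = 1 ∧
      R ε * (H - ((E₀ : ℂ) + (ε : ℂ) * Complex.I) • (1 : ℋ →L[ℂ] ℋ)) = 1)
    (ℓ : ℂ) (hℓ : ℓ.im ≠ 0)
    (hlim : Tendsto (fun ε : ℝ =>
        (inner ℂ (W ψ₀ - (inner ℂ ψ₀ (W ψ₀) : ℂ) • ψ₀)
          (R ε (W ψ₀ - (inner ℂ ψ₀ (W ψ₀) : ℂ) • ψ₀)) : ℂ))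
      (𝓝[>] (0 : ℝ)) (𝓝 ℓ)) :
    ¬ ∃ δ : ℝ, 0 < δ ∧
      ∃ (E : ℝ → ℝ) (ψ : ℝ → ℋ) (E' : ℝ → ℝ) (ψ' : ℝ → ℋ) (E'' : ℝ → ℝ) (ψ'' : ℝ → ℋ),
        E 0 = E₀ ∧ ψ 0 = ψ₀ ∧
        (∀ lam ∈ Ico (0:ℝ) δ, (H + (lam : ℂ) • W) (ψ lam) = (E lam : ℂ) • ψ lam) ∧
        (∀ lam ∈ Ico (0:ℝ) δ, HasDerivWithinAt E (E' lam) (Ico (0:ℝ) δ) lam) ∧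
        (∀ lam ∈ Ico (0:ℝ) δ, HasDerivWithinAt ψ (ψ' lam) (Ico (0:ℝ) δ) lam) ∧
        (∀ lam ∈ Ico (0:ℝ) δ, HasDerivWithinAt E' (E'' lam) (Ico (0:ℝ) δ) lam) ∧
        (∀ lam ∈ Ico (0:ℝ) δ, HasDerivWithinAt ψ' (ψ'' lam) (Ico (0:ℝ) δ) lam) := by
  rintro ⟨δ, hδ, E, ψ, E', ψ', -, -, hE0, hψ0, heig, hE, hψ, -, -⟩
  have h0 : (0 : ℝ) ∈ Ico 0 δ := ⟨le_rfl, hδ⟩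
  have hfirst : H (ψ' 0) + W ψ₀ = (E₀ : ℂ) • ψ' 0 + (E' 0 : ℂ) • ψ₀ := by
    simpa [hE0, hψ0] using
      eigen_branch_first_order (uniqueDiffOn_Ico 0 δ 0 h0) h0 heig (hE 0 h0) (hψ 0 h0)
  set T := H - (E₀ : ℂ) • (1 : ℋ →L[ℂ] ℋ)
  have hT : (T : ℋ →ₗ[ℂ] ℋ).IsSymmetric :=
    (hH.sub (IsSelfAdjoint.smul (conj_ofReal E₀) (.one _))).isSymmetric
  have hRT : ∀ ε : ℝ, 0 < ε → (T - (ε * I) • 1) * R ε = 1 ∧ R ε * (T - (ε * I) • 1) = 1 := by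
    simpa only [T, add_smul, sub_sub] using hR
  have hφ := apply_neg_eq_sub_inner_smul hH.isSymmetric hψ₀ hEig hfirst
  have hlimT := hT.tendsto_inner_resolvent hRT (-ψ' 0)
  rw [hφ] at hlimT
  rw [tendsto_nhds_unique hlim hlimT, ← hφ] at hℓ
  exact hℓ (hT.im_inner_apply_self _)

/-- Instability of the bound state: if the Fermi golden rule limit
`lim_{ε→0⁺} ⟪P̄₀(Wψ₀), R(ε) P̄₀(Wψ₀)⟫` exists and has nonzero imaginary part, then no twice
differentiable eigenvalue branch `λ ↦ (E(λ), ψ(λ))` through `(E₀, ψ₀)` exists. -/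
theorem stmt_2 {ℋ : Type*} [NormedAddCommGroup ℋ] [InnerProductSpace ℂ ℋ] [CompleteSpace ℋ]
    (H W : ℋ →L[ℂ] ℋ) (hH : IsSelfAdjoint H) (hW : IsSelfAdjoint W)
    (E₀ : ℝ) (ψ₀ : ℋ) (hψ₀ : ‖ψ₀‖ = 1) (hEig : H ψ₀ = (E₀ : ℂ) • ψ₀)
    (hSimple : ∀ v : ℋ, H v = (E₀ : ℂ) • v → ∃ c : ℂ, v = c • ψ₀)
    (R : ℝ → (ℋ →L[ℂ] ℋ))
    (hR : ∀ ε : ℝ, 0 < ε →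
      (H - ((E₀ : ℂ) + (ε : ℂ) * Complex.I) • (1 : ℋ →L[ℂ] ℋ)) * R ε = 1 ∧
      R ε * (H - ((E₀ : ℂ) + (ε : ℂ) * Complex.I) • (1 : ℋ →L[ℂ] ℋ)) = 1)
    (ℓ : ℂ) (hℓ : ℓ.im ≠ 0)
    (hlim : Tendsto (fun ε : ℝ =>
        (inner ℂ (W ψ₀ - (inner ℂ ψ₀ (W ψ₀) : ℂ) • ψ₀)
          (R ε (W ψ₀ - (inner ℂ ψ₀ (W ψ₀) : ℂ) • ψ₀)) : ℂ))
      (𝓝[>] (0 : ℝ)) (𝓝 ℓ)) :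
    ¬ ∃ δ : ℝ, 0 < δ ∧
      ∃ (E : ℝ → ℝ) (ψ : ℝ → ℋ) (E' : ℝ → ℝ) (ψ' : ℝ → ℋ) (E'' : ℝ → ℝ) (ψ'' : ℝ → ℋ),
        E 0 = E₀ ∧ ψ 0 = ψ₀ ∧
        (∀ lam ∈ Ico (0:ℝ) δ, (H + (lam : ℂ) • W) (ψ lam) = (E lam : ℂ) • ψ lam) ∧
        (∀ lam ∈ Ico (0:ℝ) δ, HasDerivWithinAt E (E' lam) (Ico (0:ℝ) δ) lam) ∧
        (∀ lam ∈ Ico (0:ℝ) δ, HasDerivWithinAt ψ (ψ' lam) (Ico (0:ℝ) δ) lam) ∧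
        (∀ lam ∈ Ico (0:ℝ) δ, HasDerivWithinAt E' (E'' lam) (Ico (0:ℝ) δ) lam) ∧
        (∀ lam ∈ Ico (0:ℝ) δ, HasDerivWithinAt ψ' (ψ'' lam) (Ico (0:ℝ) δ) lam) :=
  stmt_2_general H W hH E₀ ψ₀ hψ₀ hEig R hR ℓ hℓ hlim
end

section
/- Let H and V be bounded self-adjoint operators on ℋ. Then every element z of σ(H + V) can be written as z = x + y with x ∈ σ(H) and y a real number satisfying inf σ(V) ≤ y ≤ sup σ(V); and every element z of σ(H + V) can also be written as z = x + y with y ∈ σ(V) and x a real number satisfying inf σ(H) ≤ x ≤ sup σ(H). In other words, σ(H+V) ⊆ (σ(H) + [inf σ(V), sup σ(V)]) ∩ ([inf σ(H), sup σ(H)] + σ(V)). -/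
open Metric in
lemma key_spec_sum {A : Type*} [CStarAlgebra A] [Nontrivial A] (a b : A)
    (ha : IsSelfAdjoint a) (hb : IsSelfAdjoint b) {z : ℝ} (hz : z ∈ spectrum ℝ (a + b)) :
    ∃ x ∈ spectrum ℝ a, sInf (spectrum ℝ b) ≤ z - x ∧ z - x ≤ sSup (spectrum ℝ b) := by
  by_contra hcon
  push_neg at hcon
  have hbne : (spectrum ℝ b).Nonempty := hb.spectrum_nonempty
  have hbc : IsCompact (spectrum ℝ b) := spectrum.isCompact b
  have hane : (spectrum ℝ a).Nonempty := ha.spectrum_nonempty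
  have hac : IsCompact (spectrum ℝ a) := spectrum.isCompact a
  set m : ℝ := (sInf (spectrum ℝ b) + sSup (spectrum ℝ b)) / 2 with hm
  set r : ℝ := (sSup (spectrum ℝ b) - sInf (spectrum ℝ b)) / 2 with hr
  have hIle : sInf (spectrum ℝ b) ≤ sSup (spectrum ℝ b) :=
    Real.sInf_le_sSup _ hbc.bddBelow hbc.bddAbove
  have hr0 : 0 ≤ r := by rw [hr]; linarith
  -- every x in σ a is far from z - m
  have hfar : ∀ x ∈ spectrum ℝ a, r < |z - m - x| := by
    intro x hx
    have : z - x < sInf (spectrum ℝ b) ∨ sSup (spectrum ℝ b) < z - x := by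
      rcases le_or_gt (sInf (spectrum ℝ b)) (z - x) with h | h
      · exact Or.inr (hcon x hx h)
      · exact Or.inl h
    rw [lt_abs]
    rcases this with h | h
    · right; rw [hm] at *; linarith
    · left; rw [hm] at *; linarith
  -- the distance from z - m to σ a exceeds r
  obtain ⟨x₀, hx₀, hmin⟩ := hac.exists_infDist_eq_dist hane (z - m)
  have hd : r < infDist (z - m) (spectrum ℝ a) := by
    rw [hmin, Real.dist_eq]; exact hfar x₀ hx₀
  set d : ℝ := infDist (z - m) (spectrum ℝ a) with hdd
  have hd0 : 0 < d := lt_of_le_of_lt hr0 hd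
  have hdle : ∀ x ∈ spectrum ℝ a, d ≤ |x - (z - m)| := by
    intro x hx
    rw [abs_sub_comm, ← Real.dist_eq]
    exact infDist_le_dist_of_mem hx
  -- μ := z - m is not in σ a
  set μ : ℝ := z - m with hμ
  have hne : ∀ x ∈ spectrum ℝ a, x - μ ≠ 0 := by
    intro x hx h
    have := hdle x hx
    rw [h] at this
    simp at this; linarith
  have hcont : ContinuousOn (fun x : ℝ => (x - μ)⁻¹) (spectrum ℝ a) :=
    ContinuousOn.inv₀ (by fun_prop) hne
  set C : A := cfc (fun x : ℝ => (x - μ)⁻¹) a with hC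
  have hsub : cfc (fun x : ℝ => x - μ) a = a - algebraMap ℝ A μ := by
    rw [cfc_sub _ _ a (by fun_prop) (by fun_prop), cfc_id' ℝ a, cfc_const μ a]
  have hCmul : C * (a - algebraMap ℝ A μ) = 1 := by
    rw [← hsub, hC, ← cfc_mul _ _ a hcont (by fun_prop)]
    rw [show (fun x : ℝ => (x - μ)⁻¹ * (x - μ)) = fun x => (x - μ)⁻¹ * (x - μ) from rfl]
    rw [cfc_congr (g := fun _ : ℝ => (1 : ℝ)) fun x hx => inv_mul_cancel₀ (hne x hx)]
    exact cfc_const_one ℝ a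
  have hmulC : (a - algebraMap ℝ A μ) * C = 1 := by
    rw [← hsub, hC, ← cfc_mul _ _ a (by fun_prop) hcont]
    rw [cfc_congr (g := fun _ : ℝ => (1 : ℝ)) fun x hx => mul_inv_cancel₀ (hne x hx)]
    exact cfc_const_one ℝ a
  have hCnorm : ‖C‖ ≤ d⁻¹ := by
    apply norm_cfc_le (by positivity)
    intro x hx
    rw [Real.norm_eq_abs, abs_inv]
    exact inv_anti₀ hd0 (hdle x hx)
  set W : A := b - algebraMap ℝ A m with hW
  have hWnorm : ‖W‖ ≤ r := by
    have : W = cfc (fun x : ℝ => x - m) b := by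
      rw [hW, cfc_sub _ _ b (by fun_prop) (by fun_prop), cfc_id' ℝ b, cfc_const m b]
    rw [this]
    apply norm_cfc_le hr0
    intro x hx
    have h1 : sInf (spectrum ℝ b) ≤ x := csInf_le hbc.bddBelow hx
    have h2 : x ≤ sSup (spectrum ℝ b) := le_csSup hbc.bddAbove hx
    rw [Real.norm_eq_abs, abs_le]
    constructor <;> [rw [hm, hr]; rw [hm, hr]] <;> linarith
  -- 1 + C * W is a unit
  have hCW : ‖-(C * W)‖ < 1 := by
    rw [norm_neg]
    calc ‖C * W‖ ≤ ‖C‖ * ‖W‖ := norm_mul_le _ _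
      _ ≤ d⁻¹ * r := by
          apply mul_le_mul hCnorm hWnorm (norm_nonneg _) (by positivity)
      _ < 1 := by
          rw [inv_mul_lt_iff₀ hd0, mul_one]; exact hd
  have hunit1 : IsUnit (1 + C * W) := by
    have := (Units.oneSub (-(C * W)) hCW).isUnit
    rwa [Units.val_oneSub, sub_neg_eq_add] at this
  have hunit2 : IsUnit (a - algebraMap ℝ A μ) := ⟨⟨a - algebraMap ℝ A μ, C, hmulC, hCmul⟩, rfl⟩
  -- a + b - z is a unit
  have hzsplit : a + b - algebraMap ℝ A z = (a - algebraMap ℝ A μ) * (1 + C * W) := by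
    rw [mul_add, mul_one, ← mul_assoc]
    rw [show (a - algebraMap ℝ A μ) * C = 1 from hmulC, one_mul]
    rw [hW, hμ]
    rw [show z = (z - m) + m by ring, map_add]
    abel_nf
  have hunit : IsUnit (algebraMap ℝ A z - (a + b)) := by
    have : IsUnit (a + b - algebraMap ℝ A z) := by
      rw [hzsplit]; exact hunit2.mul hunit1
    simpa using this.neg
  exact spectrum.notMem_iff.mpr hunit hz

/-- Spectrum of a sum of bounded self-adjoint operators:
`σ(H+V) ⊆ (σ(H) + [inf σ(V), sup σ(V)]) ∩ ([inf σ(H), sup σ(H)] + σ(V))`. -/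
theorem stmt_3 {ℋ : Type*} [NormedAddCommGroup ℋ] [InnerProductSpace ℂ ℋ]
    [CompleteSpace ℋ] [Nontrivial ℋ]
    (H V : ℋ →L[ℂ] ℋ) (hH : IsSelfAdjoint H) (hV : IsSelfAdjoint V) :
    ∀ z ∈ spectrum ℝ (H + V),
      (∃ x ∈ spectrum ℝ H, ∃ y : ℝ,
        sInf (spectrum ℝ V) ≤ y ∧ y ≤ sSup (spectrum ℝ V) ∧ z = x + y) ∧
      (∃ y ∈ spectrum ℝ V, ∃ x : ℝ,
        sInf (spectrum ℝ H) ≤ x ∧ x ≤ sSup (spectrum ℝ H) ∧ z = x + y) := by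
  intro z hz
  constructor
  · obtain ⟨x, hx, h1, h2⟩ := key_spec_sum H V hH hV hz
    exact ⟨x, hx, z - x, h1, h2, by ring⟩
  · rw [add_comm] at hz
    obtain ⟨y, hy, h1, h2⟩ := key_spec_sum V H hV hH hz
    exact ⟨y, hy, z - y, h1, h2, by ring⟩
end

section
/- Let d ≥ 1 and let f : ℝ^d → ℂ be measurable, not almost everywhere zero, and exponentially decaying: there is a constant C > 0 with |f(x)| ≤ C·e^{−‖x‖/C} for almost every x ∈ ℝ^d. Define its Fourier transform by (𝓕f)(ξ) := ∫_{ℝ^d} e^{−i⟨ξ,x⟩} f(x) dx. Then the zero set {ξ ∈ ℝ^d : (𝓕f)(ξ) = 0} has empty interior; equivalently, 𝓕f does not vanish identically on any nonempty open subset of ℝ^d, so the support of 𝓕f is all of ℝ^d. -/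
/-!
Fix a point `ξ₀` of an open ball on which `𝓕 f` vanishes and any `ξ`. Along the line
`t ↦ ξ₀ + t (ξ - ξ₀)` the transform is `t ↦ ∫ exp(-i t ⟪ξ - ξ₀, x⟫) g(x) dx` with
`g(x) = exp(-i ⟪ξ₀, x⟫) f(x)`. Exponential decay of `f` makes this integral converge and depend
holomorphically on `t` in a strip `|Im t| < c` around the real axis. It vanishes for small real
`t`, hence on the whole strip by the identity theorem, and in particular at `t = 1`. So `𝓕 f`
vanishes everywhere, and Fourier injectivity on `L¹` (tested against Schwartz functions) forces
`f = 0` almost everywhere.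
-/

open MeasureTheory Complex Module Filter Topology
open scoped FourierTransform RealInnerProductSpace Real

section ExponentialDecay

variable {E : Type*} [NormedAddCommGroup E] [NormedSpace ℝ E] [FiniteDimensional ℝ E]
  [MeasurableSpace E] [BorelSpace E] {μ : Measure E} [μ.IsAddHaarMeasure]

theorem Real.exp_neg_mul_le_mul_one_add_rpow_neg {a t : ℝ} (ha : 0 < a) (ht : 0 ≤ t) (n : ℕ) :
    Real.exp (-(a * t)) ≤ n.factorial * Real.exp a / a ^ n * (1 + t) ^ (-(n : ℝ)) := by
  have key := Real.pow_div_factorial_le_exp (x := a * (1 + t)) (by positivity) n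
  rw [mul_one_add, Real.exp_add, div_le_iff₀ (by positivity)] at key
  rw [Real.rpow_neg (by positivity), Real.rpow_natCast, Real.exp_neg]
  field_simp
  rw [← mul_pow, mul_one_add]
  linarith

theorem integrable_exp_neg_mul_norm {a : ℝ} (ha : 0 < a) :
    Integrable (fun x : E ↦ Real.exp (-(a * ‖x‖))) μ := by
  set n := finrank ℝ E + 1
  refine ((integrable_one_add_norm (μ := μ) (r := n) (by simp [n])).const_mul
    (n.factorial * Real.exp a / a ^ n)).mono' (by fun_prop) (.of_forall fun x ↦ ?_)
  rw [Real.norm_of_nonneg (Real.exp_pos _).le]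
  exact Real.exp_neg_mul_le_mul_one_add_rpow_neg ha (norm_nonneg x) n

theorem integrable_exp_mul_norm_mul_of_norm_le {f : E → ℂ} (hf : AEStronglyMeasurable f μ)
    {C : ℝ} (hdecay : ∀ᵐ x ∂μ, ‖f x‖ ≤ C * Real.exp (-‖x‖ / C)) {b : ℝ} (hb : b < 1 / C) :
    Integrable (fun x ↦ Real.exp (b * ‖x‖) * ‖f x‖) μ := by
  refine ((integrable_exp_neg_mul_norm (μ := μ) (sub_pos.2 hb)).const_mul C).mono'
    (by fun_prop) ?_
  filter_upwards [hdecay] with x hx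
  rw [norm_mul, Real.norm_of_nonneg (Real.exp_pos _).le, norm_norm]
  calc Real.exp (b * ‖x‖) * ‖f x‖ ≤ Real.exp (b * ‖x‖) * (C * Real.exp (-‖x‖ / C)) := by gcongr
    _ = C * Real.exp (-((1 / C - b) * ‖x‖)) := by
      rw [mul_left_comm, ← Real.exp_add]
      ring_nf

end ExponentialDecay

section Strip

theorem norm_cexp_neg_I_mul_mul_ofReal_le (z : ℂ) (t : ℝ) :
    ‖cexp (-I * z * t)‖ ≤ Real.exp (|z.im| * |t|) := by
  rw [Complex.norm_exp, Real.exp_le_exp, ← abs_mul]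
  simpa using le_abs_self (z.im * t)

theorem Real.mul_exp_mul_le_exp_add_mul_div {b ε : ℝ} (hε : 0 < ε) (t : ℝ) :
    t * Real.exp (b * t) ≤ Real.exp ((b + ε) * t) / ε := by
  rw [le_div_iff₀ hε, add_mul, Real.exp_add]
  nlinarith [Real.add_one_le_exp (ε * t), Real.exp_pos (b * t)]

variable {α : Type*} [MeasurableSpace α] {μ : Measure α} {h : α → ℝ} {g : α → ℂ} {c : ℝ}

theorem integrable_cexp_neg_I_mul_mul (hh : AEStronglyMeasurable h μ) (hg : AEStronglyMeasurable g μ)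
    (hint : ∀ b < c, Integrable (fun x ↦ Real.exp (b * |h x|) * ‖g x‖) μ) {z : ℂ}
    (hz : |z.im| < c) : Integrable (fun x ↦ cexp (-I * z * h x) * g x) μ := by
  refine (hint _ hz).mono' (by fun_prop) (.of_forall fun x ↦ ?_)
  rw [norm_mul]
  gcongr
  exact norm_cexp_neg_I_mul_mul_ofReal_le z (h x)

theorem differentiableOn_integral_cexp_neg_I_mul_mul (hh : AEStronglyMeasurable h μ)
    (hg : AEStronglyMeasurable g μ)
    (hint : ∀ b < c, Integrable (fun x ↦ Real.exp (b * |h x|) * ‖g x‖) μ) :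
    DifferentiableOn ℂ (fun z : ℂ ↦ ∫ x, cexp (-I * z * h x) * g x ∂μ) {z | |z.im| < c} := by
  intro z₀ (hz₀ : |z₀.im| < c)
  set ε := (c - |z₀.im|) / 3
  have hε : 0 < ε := by simp only [ε]; linarith
  have him : ∀ z ∈ Metric.ball z₀ ε, |z.im| < |z₀.im| + ε := fun z hz ↦ by
    have := (abs_im_le_norm (z - z₀)).trans_lt (mem_ball_iff_norm.1 hz)
    rw [sub_im] at this
    linarith [abs_sub_abs_le_abs_sub z.im z₀.im]
  refine (hasDerivAt_integral_of_dominated_loc_of_deriv_le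
    (F' := fun z x ↦ -I * h x * (cexp (-I * z * h x) * g x))
    (bound := fun x ↦ Real.exp ((|z₀.im| + 2 * ε) * |h x|) * ‖g x‖ / ε)
    (Metric.ball_mem_nhds z₀ hε) (.of_forall fun z ↦ by fun_prop)
    (integrable_cexp_neg_I_mul_mul hh hg hint hz₀) (by fun_prop) (.of_forall fun x z hz ↦ ?_)
    ((hint _ (by simp only [ε]; linarith)).div_const ε)
    (.of_forall fun x z _ ↦ ?_)).2.differentiableAt.differentiableWithinAt
  · calc ‖-I * h x * (cexp (-I * z * h x) * g x)‖
        = |h x| * ‖cexp (-I * z * h x)‖ * ‖g x‖ := by simp [mul_assoc]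
      _ ≤ |h x| * Real.exp ((|z₀.im| + ε) * |h x|) * ‖g x‖ := by
        gcongr
        exact (norm_cexp_neg_I_mul_mul_ofReal_le z (h x)).trans
          (Real.exp_le_exp.2 (by gcongr; exact (him z hz).le))
      _ ≤ Real.exp ((|z₀.im| + ε + ε) * |h x|) / ε * ‖g x‖ := by
        gcongr
        exact Real.mul_exp_mul_le_exp_add_mul_div hε _
      _ = _ := by ring_nf
  · have hlin : HasDerivAt (fun y : ℂ ↦ -I * y * h x) (-I * h x) z := by
      simpa using ((hasDerivAt_id z).const_mul (-I)).mul_const (h x : ℂ)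
    exact (hlin.cexp.mul_const (g x)).congr_deriv (by ring)

theorem eq_zero_of_differentiableOn_strip_of_eq_zero_near_zero {G : ℂ → ℂ} {c r : ℝ}
    (hc : 0 < c) (hG : DifferentiableOn ℂ G {z | |z.im| < c}) (hr : 0 < r)
    (hzero : ∀ t : ℝ, |t| < r → G t = 0) (t : ℝ) : G t = 0 := by
  have hstrip : {z : ℂ | |z.im| < c} = im ⁻¹' Metric.ball 0 c := by
    ext z
    simp
  have hopen : IsOpen {z : ℂ | |z.im| < c} := hstrip ▸ Metric.isOpen_ball.preimage continuous_im
  have hconn : IsPreconnected {z : ℂ | |z.im| < c} :=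
    hstrip ▸ ((convex_ball 0 c).linear_preimage imLm).isPreconnected
  have hreal : ∀ᶠ t : ℝ in 𝓝[≠] 0, G t = 0 :=
    eventually_nhdsWithin_of_eventually_nhds
      (Metric.eventually_nhds_iff.2 ⟨r, hr, fun t ht ↦ hzero t (by simpa using ht)⟩)
  have hofReal : Tendsto ((↑) : ℝ → ℂ) (𝓝[≠] 0) (𝓝[≠] ((0 : ℝ) : ℂ)) :=
    continuous_ofReal.continuousWithinAt.tendsto_nhdsWithin fun _ _ ↦ by simp_all
  exact (hG.analyticOnNhd hopen).eqOn_zero_of_preconnected_of_frequently_eq_zero hconn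
    (by simpa using hc) (hofReal.frequently hreal.frequently) (by simpa using hc)

end Strip

section InnerProductSpace

variable {E : Type*} [NormedAddCommGroup E] [InnerProductSpace ℝ E] [MeasurableSpace E]
  [BorelSpace E]

theorem integral_cexp_inner_mul_eq_zero_of_forall_mem_ball {μ : Measure E} {f : E → ℂ}
    (hf : AEStronglyMeasurable f μ) {c : ℝ} (hc : 0 < c)
    (hint : ∀ b < c, Integrable (fun x ↦ Real.exp (b * ‖x‖) * ‖f x‖) μ) {ξ₀ : E} {r : ℝ}
    (hr : 0 < r) (hzero : ∀ ξ ∈ Metric.ball ξ₀ r, ∫ x, cexp (-I * ⟪ξ, x⟫) * f x ∂μ = 0)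
    (ξ : E) : ∫ x, cexp (-I * ⟪ξ, x⟫) * f x ∂μ = 0 := by
  set v := ξ - ξ₀
  set g : E → ℂ := fun x ↦ cexp (-I * ⟪ξ₀, x⟫) * f x
  have hline (t : ℝ) : ∫ x, cexp (-I * ⟪ξ₀ + t • v, x⟫) * f x ∂μ =
      ∫ x, cexp (-I * t * ⟪v, x⟫) * g x ∂μ := by
    congr 1 with x
    simp only [g, inner_add_left, real_inner_smul_left, ← mul_assoc, ← Complex.exp_add]
    push_cast
    ring_nf
  have hdiff : DifferentiableOn ℂ (fun z : ℂ ↦ ∫ x, cexp (-I * z * ⟪v, x⟫) * g x ∂μ)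
      {z | |z.im| < c / (‖v‖ + 1)} := by
    refine differentiableOn_integral_cexp_neg_I_mul_mul (by fun_prop) (by fun_prop) fun b hb ↦
      (hint (max b 0 * (‖v‖ + 1)) ?_).mono' (by fun_prop) (.of_forall fun x ↦ ?_)
    · rw [lt_div_iff₀ (by positivity)] at hb
      rcases le_total b 0 with hb0 | hb0
      · simpa [max_eq_right hb0] using hc
      · rwa [max_eq_left hb0]
    · have hnorm_g : ‖g x‖ = ‖f x‖ := by simp [g, Complex.norm_exp]
      rw [Real.norm_of_nonneg (by positivity), hnorm_g]
      refine mul_le_mul_of_nonneg_right (Real.exp_le_exp.2 ?_) (norm_nonneg _)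
      calc b * |⟪v, x⟫| ≤ max b 0 * |⟪v, x⟫| := by gcongr; exact le_max_left b 0
        _ ≤ max b 0 * (‖v‖ * ‖x‖) := by gcongr; exact abs_real_inner_le_norm v x
        _ ≤ max b 0 * (‖v‖ + 1) * ‖x‖ := by rw [mul_assoc]; gcongr; linarith
  have hone := eq_zero_of_differentiableOn_strip_of_eq_zero_near_zero (by positivity) hdiff
    (r := r / (‖v‖ + 1)) (by positivity) (fun t ht ↦ ?_) 1
  · rw [show ξ = ξ₀ + (1 : ℝ) • v by simp [v], hline]
    exact_mod_cast hone
  · rw [← hline]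
    refine hzero _ ?_
    rw [lt_div_iff₀ (by positivity)] at ht
    rw [Metric.mem_ball, dist_self_add_left, norm_smul, Real.norm_eq_abs]
    nlinarith [abs_nonneg t, norm_nonneg v]

variable [FiniteDimensional ℝ E]

theorem Real.fourier_eq_integral_cexp_inner_mul (f : E → ℂ) (w : E) :
    𝓕 f w = ∫ x, cexp (-I * ⟪(2 * π) • w, x⟫) * f x := by
  rw [Real.fourier_eq']
  congr 1 with x
  rw [smul_eq_mul, real_inner_smul_left, real_inner_comm]
  push_cast
  ring_nf

theorem ae_eq_zero_of_fourier_eq_zero {F : Type*} [NormedAddCommGroup F] [NormedSpace ℂ F]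
    [CompleteSpace F] {f : E → F} (hf : Integrable f) (h : 𝓕 f = 0) : f =ᵐ[volume] 0 := by
  refine ae_eq_zero_of_integral_contDiff_smul_eq_zero hf.locallyIntegrable fun g hg hgs ↦ ?_
  set G : SchwartzMap E ℂ := (hgs.comp_left ofReal_zero).toSchwartzMap
    (ofRealCLM.contDiff.comp hg)
  calc ∫ x, g x • f x = ∫ x, 𝓕 ⇑(𝓕⁻ G : SchwartzMap E ℂ) x • f x := by
        rw [← SchwartzMap.fourier_coe, FourierTransform.fourier_fourierInv_eq]
        exact integral_congr_ae (.of_forall fun x ↦ (Complex.coe_smul (g x) (f x)).symm)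
    _ = ∫ x, 𝓕⁻ G x • 𝓕 f x := by
        have := VectorFourier.integral_fourierIntegral_smul_eq_flip (L := innerₗ E)
          (μ := volume) (ν := volume) Real.continuous_fourierChar continuous_inner
          (𝓕⁻ G).integrable hf
        rwa [flip_innerₗ] at this
    _ = 0 := by simp [h]

end InnerProductSpace

theorem stmt_4_general (d : ℕ) (f : EuclideanSpace ℝ (Fin d) → ℂ)
    (hmeas : Measurable f) (hne : ¬ f =ᵐ[volume] 0)
    (C : ℝ) (hC : 0 < C)
    (hdecay : ∀ᵐ x ∂(volume : Measure (EuclideanSpace ℝ (Fin d))),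
      ‖f x‖ ≤ C * Real.exp (-‖x‖ / C)) :
    interior {ξ : EuclideanSpace ℝ (Fin d) |
      (∫ x, Complex.exp (-Complex.I * ((inner ℝ ξ x : ℝ) : ℂ)) * f x) = 0} = ∅ := by
  have hint (b : ℝ) (hb : b < 1 / C) :=
    integrable_exp_mul_norm_mul_of_norm_le hmeas.aestronglyMeasurable hdecay hb
  have hf : Integrable f := by
    simpa [integrable_norm_iff hmeas.aestronglyMeasurable] using hint 0 (by positivity)
  refine Set.eq_empty_of_forall_notMem fun ξ₀ hξ₀ ↦ hne ?_
  obtain ⟨r, hr, hball⟩ := Metric.isOpen_iff.1 isOpen_interior ξ₀ hξ₀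
  have hzero := integral_cexp_inner_mul_eq_zero_of_forall_mem_ball hmeas.aestronglyMeasurable
    (by positivity) hint hr (hball.trans interior_subset)
  refine ae_eq_zero_of_fourier_eq_zero hf (funext fun w ↦ ?_)
  rw [Real.fourier_eq_integral_cexp_inner_mul]
  exact hzero _

/-- The Fourier transform of a (nontrivial) exponentially decaying function does not vanish
on any nonempty open set: its zero set has empty interior. -/
theorem stmt_4 (d : ℕ) (hd : 1 ≤ d) (f : EuclideanSpace ℝ (Fin d) → ℂ)
    (hmeas : Measurable f) (hne : ¬ f =ᵐ[volume] 0)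
    (C : ℝ) (hC : 0 < C)
    (hdecay : ∀ᵐ x ∂(volume : Measure (EuclideanSpace ℝ (Fin d))),
      ‖f x‖ ≤ C * Real.exp (-‖x‖ / C)) :
    interior {ξ : EuclideanSpace ℝ (Fin d) |
      (∫ x, Complex.exp (-Complex.I * ((inner ℝ ξ x : ℝ) : ℂ)) * f x) = 0} = ∅ :=
  stmt_4_general d f hmeas hne C hC hdecay
end

section
/- Let d ≥ 1, let k ∈ ℝ^d with k ≠ 0, and let f : ℝ^d → ℝ be continuous with compact support. For ε > 0 set A(ε) := ∫_{ℝ^d} ε·f(y) / ((‖y+k‖² − ‖k‖²)² + ε²) dy, and for 0 < δ < ‖k‖ set B(δ) := (2δ)^{−1} ∫_{{y ∈ ℝ^d : ‖k‖ − δ ≤ ‖y+k‖ ≤ ‖k‖ + δ}} f(y) dy. Then there exists a real number L such that B(δ) → L as δ → 0⁺ and A(ε) → (π/(2‖k‖))·L as ε → 0⁺. -/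
/-!
Translating by `k` and passing to polar coordinates, both quantities become one-dimensional
integrals against the radial density `ρ r = r ^ (d - 1) ∫_{S^{d-1}} f (r ω - k) dσ(ω)`, which is
continuous with compact support. The shell averages are symmetric difference quotients of
`∫ ρ`, so they tend to `L = ρ ‖k‖`. In the other integral the substitution `u = r² - ‖k‖²`
produces the Poisson kernel `ε / (u² + ε²)`, an approximate identity of total mass `π`, applied
to `ρ √(u + ‖k‖²) / (2 √(u + ‖k‖²))`, whose value at `u = 0` is `L / (2 ‖k‖)`.
-/

open MeasureTheory Filter Topology Real Set Metric Module

variable {V : Type*} [NormedAddCommGroup V] [NormedSpace ℝ V]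

theorem tendsto_integral_poissonKernel_smul [CompleteSpace V] {ψ : ℝ → V} (hψ : Integrable ψ)
    (hψ₀ : ContinuousAt ψ 0) :
    Tendsto (fun ε : ℝ => ∫ u, (ε / (u ^ 2 + ε ^ 2)) • ψ u) (𝓝[>] 0) (𝓝 (π • ψ 0)) := by
  -- `ε / (u ^ 2 + ε ^ 2) = π * (ε⁻¹ * κ (ε⁻¹ * u))`: a rescaled peak function of mass one.
  set κ : ℝ → ℝ := fun x => π⁻¹ * (1 + x ^ 2)⁻¹
  have hκ_nonneg : ∀ x, 0 ≤ κ x := fun x => by positivity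
  have hκ_integral : ∫ x, κ x = 1 := by
    simp only [κ, integral_const_mul, integral_univ_inv_one_add_sq, inv_mul_cancel₀ pi_ne_zero]
  have hκ_decay : Tendsto (fun x => ‖x‖ ^ finrank ℝ ℝ * κ x) (Bornology.cobounded ℝ) (𝓝 0) := by
    have hinv : Tendsto (fun x : ℝ => π⁻¹ * ‖x‖⁻¹) (Bornology.cobounded ℝ) (𝓝 0) := by
      simpa using (tendsto_norm_cobounded_atTop (E := ℝ)).inv_tendsto_atTop.const_mul π⁻¹
    refine squeeze_zero' (Eventually.of_forall fun x => by positivity) ?_ hinv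
    filter_upwards [(tendsto_norm_cobounded_atTop (E := ℝ)).eventually_gt_atTop 0] with x hx
    rw [finrank_self, pow_one, mul_left_comm]
    gcongr
    rw [← div_eq_mul_inv, div_le_iff₀ (by positivity), ← sq_abs x, ← Real.norm_eq_abs]
    field_simp
    linarith
  have hlim := ((tendsto_integral_comp_smul_smul_of_integrable hκ_nonneg hκ_integral hκ_decay hψ
    hψ₀).comp tendsto_inv_nhdsGT_zero).const_smul π
  refine hlim.congr' ?_
  filter_upwards [self_mem_nhdsWithin] with ε (hε : 0 < ε)
  simp only [Function.comp_apply, finrank_self, pow_one, smul_eq_mul, ← integral_smul, smul_smul]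
  congr 1 with u
  congr 1
  simp only [κ]
  field_simp
  ring

theorem image_sq_sub_Ioi (c : ℝ) : (fun r : ℝ => r ^ 2 - c) '' Ioi 0 = Ioi (-c) := by
  ext u
  constructor
  · rintro ⟨r, hr, rfl⟩
    simp only [mem_Ioi] at hr ⊢
    nlinarith
  · intro hu
    have hu' : 0 < u + c := by simp only [mem_Ioi] at hu; linarith
    exact ⟨√(u + c), sqrt_pos.2 hu', by simp only [sq_sqrt hu'.le]; ring⟩

theorem injOn_sq_sub_Ioi (c : ℝ) : InjOn (fun r : ℝ => r ^ 2 - c) (Ioi 0) :=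
  fun _ ha _ hb hab => (pow_left_strictMonoOn₀ two_ne_zero).injOn (le_of_lt ha) (le_of_lt hb)
    (sub_left_inj.1 hab)

theorem abs_two_mul_smul_sqrt_sq_sub_add (c : ℝ) (h : ℝ → V) {r : ℝ} (hr : 0 < r) :
    |2 * r| • (2 * √(r ^ 2 - c + c))⁻¹ • h √(r ^ 2 - c + c) = h r := by
  rw [sub_add_cancel, sqrt_sq hr.le, smul_smul, abs_of_pos (by positivity),
    mul_inv_cancel₀ (by positivity), one_smul]

theorem integral_Ioi_eq_integral_Ioi_sqrt_add (c : ℝ) (h : ℝ → V) :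
    ∫ r in Ioi 0, h r = ∫ u in Ioi (-c), (2 * √(u + c))⁻¹ • h √(u + c) := by
  rw [← image_sq_sub_Ioi c, integral_image_eq_integral_abs_deriv_smul measurableSet_Ioi
    (fun r _ => ((hasDerivAt_pow 2 r).sub_const c).hasDerivWithinAt) (injOn_sq_sub_Ioi c)]
  exact setIntegral_congr_fun measurableSet_Ioi
    fun r hr => by simpa using (abs_two_mul_smul_sqrt_sq_sub_add c h hr).symm

theorem integrableOn_Ioi_iff_integrableOn_Ioi_sqrt_add (c : ℝ) (h : ℝ → V) :
    IntegrableOn h (Ioi 0) ↔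
      IntegrableOn (fun u => (2 * √(u + c))⁻¹ • h √(u + c)) (Ioi (-c)) := by
  rw [← image_sq_sub_Ioi c, integrableOn_image_iff_integrableOn_abs_deriv_smul measurableSet_Ioi
    (fun r _ => ((hasDerivAt_pow 2 r).sub_const c).hasDerivWithinAt) (injOn_sq_sub_Ioi c)]
  exact integrableOn_congr_fun
    (fun r hr => by simpa using (abs_two_mul_smul_sqrt_sq_sub_add c h hr).symm) measurableSet_Ioi

theorem tendsto_setIntegral_Ioi_lorentzian_sq_sub_smul [CompleteSpace V] {φ : ℝ → V} {R : ℝ}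
    (hR : 0 < R) (hφ : IntegrableOn φ (Ioi 0)) (hφR : ContinuousAt φ R) :
    Tendsto (fun ε : ℝ => ∫ r in Ioi 0, (ε / ((r ^ 2 - R ^ 2) ^ 2 + ε ^ 2)) • φ r)
      (𝓝[>] 0) (𝓝 ((π / (2 * R)) • φ R)) := by
  set ψ₀ : ℝ → V := fun u => (2 * √(u + R ^ 2))⁻¹ • φ √(u + R ^ 2)
  set ψ := (Ioi (-R ^ 2)).indicator ψ₀
  have hψ : Integrable ψ := (integrable_indicator_iff measurableSet_Ioi).2
    ((integrableOn_Ioi_iff_integrableOn_Ioi_sqrt_add (R ^ 2) φ).1 hφ)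
  have hsqrt : √(0 + R ^ 2) = R := by rw [zero_add, sqrt_sq hR.le]
  have hψ₀ : ContinuousAt ψ₀ 0 := by
    have hs : ContinuousAt (fun u : ℝ => √(u + R ^ 2)) 0 := by fun_prop
    refine ((hs.const_mul 2).inv₀ (by rw [hsqrt]; positivity)).smul ?_
    exact hφR.comp_of_eq hs hsqrt
  have hψ_near : ψ₀ =ᶠ[𝓝 0] ψ := by
    filter_upwards [Ioi_mem_nhds (neg_lt_zero.2 (pow_pos hR 2))] with u hu
    exact (indicator_of_mem hu ψ₀).symm
  have hψ_zero : ψ 0 = (2 * R)⁻¹ • φ R := by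
    rw [← hψ_near.eq_of_nhds]
    simp only [ψ₀, hsqrt]
  have hsubst : ∀ ε : ℝ, ∫ r in Ioi 0, (ε / ((r ^ 2 - R ^ 2) ^ 2 + ε ^ 2)) • φ r
      = ∫ u, (ε / (u ^ 2 + ε ^ 2)) • ψ u := by
    intro ε
    rw [integral_Ioi_eq_integral_Ioi_sqrt_add (R ^ 2), ← integral_indicator measurableSet_Ioi]
    congr 1 with u
    by_cases hu : u ∈ Ioi (-R ^ 2)
    · have hu' : 0 ≤ u + R ^ 2 := by simp only [mem_Ioi] at hu; linarith
      simp only [ψ, ψ₀, indicator_of_mem hu, sq_sqrt hu', add_sub_cancel_right]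
      rw [smul_comm]
    · simp only [ψ, indicator_of_notMem hu, smul_zero]
  have hlim := tendsto_integral_poissonKernel_smul hψ (hψ₀.congr hψ_near)
  rw [hψ_zero, smul_smul, ← div_eq_mul_inv] at hlim
  exact hlim.congr fun ε => (hsubst ε).symm

theorem tendsto_inv_two_mul_smul_setIntegral_Icc [CompleteSpace V] {φ : ℝ → V} {R : ℝ}
    (hφm : StronglyMeasurableAtFilter φ (𝓝 R)) (hφR : ContinuousAt φ R) :
    Tendsto (fun δ : ℝ => (2 * δ)⁻¹ • ∫ r in Icc (R - δ) (R + δ), φ r) (𝓝[>] 0) (𝓝 (φ R)) := by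
  have hR : Tendsto (fun δ : ℝ => R + δ) (𝓝[>] 0) (𝓝 R) :=
    ((continuous_const_add R).tendsto' 0 R (add_zero R)).mono_left nhdsWithin_le_nhds
  have hL : Tendsto (fun δ : ℝ => R - δ) (𝓝[>] 0) (𝓝 R) :=
    ((continuous_sub_left R).tendsto' 0 R (sub_zero R)).mono_left nhdsWithin_le_nhds
  have ho := (intervalIntegral.integral_sub_linear_isLittleO_of_tendsto_ae hφm
    (hφR.tendsto.mono_left inf_le_left) hL hR).tendsto_inv_smul_nhds_zero
  have hlim := ho.add_const (φ R)
  rw [zero_add] at hlim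
  refine hlim.congr' ?_
  filter_upwards [self_mem_nhdsWithin] with δ (hδ : 0 < δ)
  rw [intervalIntegral.integral_of_le (by linarith), ← integral_Icc_eq_integral_Ioc]
  simp only [Pi.sub_apply, show R + δ - (R - δ) = 2 * δ by ring, smul_sub, smul_smul]
  rw [inv_mul_cancel₀ (by positivity), one_smul, sub_add_cancel]

theorem integral_volumeIoiPow (n : ℕ) (g : ℝ → V) :
    ∫ r : Ioi (0 : ℝ), g r ∂(Measure.volumeIoiPow n) = ∫ r in Ioi 0, r ^ n • g r := by
  rw [Measure.volumeIoiPow, ← integral_subtype_comap measurableSet_Ioi]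
  simp only [ENNReal.ofReal]
  rw [integral_withDensity_eq_integral_smul (measurable_subtype_coe.pow_const n).real_toNNReal]
  refine integral_congr_ae (Eventually.of_forall fun r => ?_)
  simp only [NNReal.smul_def, Real.coe_toNNReal _ (pow_nonneg (le_of_lt r.2) n)]

section Polar

variable {E : Type*} [NormedAddCommGroup E] [NormedSpace ℝ E] [MeasurableSpace E] (μ : Measure E)

theorem integral_eq_integral_Ioi_pow_smul_integral_toSphere [FiniteDimensional ℝ E] [BorelSpace E]
    [μ.IsAddHaarMeasure] [Nontrivial E] {G : E → V} (hG : Integrable G μ) :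
    ∫ z, G z ∂μ = ∫ r in Ioi (0 : ℝ),
      r ^ (finrank ℝ E - 1) • ∫ ω : sphere (0 : E) 1, G (r • (ω : E)) ∂μ.toSphere := by
  set e := (homeomorphUnitSphereProd E).toMeasurableEquiv
  have he : MeasurePreserving e.symm (μ.toSphere.prod (Measure.volumeIoiPow (finrank ℝ E - 1)))
      (μ.comap (↑)) := (μ.measurePreserving_homeomorphUnitSphereProd).symm e
  have he_coe : ∀ p, (e.symm p : E) = (p.2 : ℝ) • (p.1 : E) :=
    homeomorphUnitSphereProd_symm_apply_coe E
  have hcompl : ∫ z, G z ∂μ = ∫ x : ({0}ᶜ : Set E), G x ∂(μ.comap (↑)) := by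
    rw [integral_subtype_comap (measurableSet_singleton 0).compl, restrict_compl_singleton]
  have hG' : Integrable (fun p : sphere (0 : E) 1 × Ioi (0 : ℝ) => G ((p.2 : ℝ) • (p.1 : E)))
      (μ.toSphere.prod (Measure.volumeIoiPow (finrank ℝ E - 1))) := by
    simp only [← he_coe]
    exact (he.integrable_comp_emb e.symm.measurableEmbedding).2
      ((integrableOn_iff_comap_subtypeVal (measurableSet_singleton 0).compl).1 hG.integrableOn)
  rw [hcompl, ← he.integral_comp']
  simp only [he_coe]
  rw [integral_prod_symm _ hG']
  exact integral_volumeIoiPow _ fun r => ∫ ω : sphere (0 : E) 1, G (r • (ω : E)) ∂μ.toSphere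

noncomputable def radialDensity (F : E → V) (r : ℝ) : V :=
  r ^ (finrank ℝ E - 1) • ∫ ω : sphere (0 : E) 1, F (r • (ω : E)) ∂μ.toSphere

theorem continuous_radialDensity [FiniteDimensional ℝ E] [BorelSpace E] [μ.IsAddHaarMeasure]
    {F : E → V} (hF : Continuous F) :
    Continuous (radialDensity μ F) := by
  refine (continuous_pow _).smul ?_
  simpa using continuous_parametric_integral_of_continuous (μ := μ.toSphere)
    (f := fun (r : ℝ) (ω : sphere (0 : E) 1) => F (r • (ω : E))) (by fun_prop) isCompact_univ

theorem hasCompactSupport_radialDensity {F : E → V} (hF : HasCompactSupport F) :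
    HasCompactSupport (radialDensity μ F) := by
  obtain ⟨M, hM⟩ := hF.isBounded.subset_closedBall 0
  refine HasCompactSupport.intro (isCompact_closedBall (0 : ℝ) M) fun r hr => ?_
  have hzero : ∀ ω : sphere (0 : E) 1, F (r • (ω : E)) = 0 := fun ω =>
    image_eq_zero_of_notMem_tsupport fun h => hr (by simpa [norm_smul] using hM h)
  simp [radialDensity, hzero]

theorem integral_norm_smul_eq_integral_radialDensity [FiniteDimensional ℝ E] [BorelSpace E]
    [μ.IsAddHaarMeasure] [Nontrivial E] (W : ℝ → ℝ) {F : E → V}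
    (h : Integrable (fun z => W ‖z‖ • F z) μ) :
    ∫ z, W ‖z‖ • F z ∂μ = ∫ r in Ioi 0, W r • radialDensity μ F r := by
  rw [integral_eq_integral_Ioi_pow_smul_integral_toSphere μ h]
  refine setIntegral_congr_fun measurableSet_Ioi fun r (hr : 0 < r) => ?_
  have hnorm : ∀ ω : sphere (0 : E) 1, ‖r • (ω : E)‖ = r := by simp [norm_smul, hr.le]
  simp only [hnorm, integral_smul, radialDensity]
  rw [smul_comm]

theorem setIntegral_preimage_norm_eq_setIntegral_radialDensity [FiniteDimensional ℝ E]
    [BorelSpace E] [μ.IsAddHaarMeasure] [Nontrivial E] {F : E → V}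
    (hF : Integrable F μ) {s : Set ℝ} (hs : MeasurableSet s) (hs₀ : s ⊆ Ioi 0) :
    ∫ z in norm ⁻¹' s, F z ∂μ = ∫ r in s, radialDensity μ F r := by
  have hns : MeasurableSet (norm ⁻¹' s : Set E) := measurable_norm hs
  have hind :
      (fun z : E => s.indicator (fun _ => (1 : ℝ)) ‖z‖ • F z) = (norm ⁻¹' s).indicator F := by
    ext z
    by_cases hz : ‖z‖ ∈ s <;> simp [hz]
  have hW := integral_norm_smul_eq_integral_radialDensity μ (s.indicator fun _ => 1) (F := F)
    (hind ▸ hF.indicator hns)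
  rw [hind] at hW
  have hρ : ∫ r in s, radialDensity μ F r = ∫ r in Ioi 0, s.indicator (radialDensity μ F) r := by
    rw [setIntegral_indicator hs, inter_eq_right.2 hs₀]
  rw [← integral_indicator hns, hW, hρ]
  refine setIntegral_congr_fun measurableSet_Ioi fun r _ => ?_
  by_cases hr : r ∈ s <;> simp [hr]

end Polar

/-- Radial concentration behind Fermi's golden rule: the kernels
`ε / ((‖y+k‖² - ‖k‖²)² + ε²)` concentrate on the sphere `∂B_{‖k‖}(-k)` with weight `π/(2‖k‖)`;
`L` is the limit of normalized thin-shell averages of `f`. -/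
theorem stmt_5 (d : ℕ) (hd : 1 ≤ d) (k : EuclideanSpace ℝ (Fin d)) (hk : k ≠ 0)
    (f : EuclideanSpace ℝ (Fin d) → ℝ) (hf : Continuous f) (hsupp : HasCompactSupport f) :
    ∃ L : ℝ,
      Tendsto (fun δ : ℝ =>
          (2 * δ)⁻¹ *
            ∫ y in {y : EuclideanSpace ℝ (Fin d) | ‖k‖ - δ ≤ ‖y + k‖ ∧ ‖y + k‖ ≤ ‖k‖ + δ}, f y)
        (𝓝[>] (0 : ℝ)) (𝓝 L) ∧
      Tendsto (fun ε : ℝ =>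
          ∫ y : EuclideanSpace ℝ (Fin d), ε * f y / ((‖y + k‖ ^ 2 - ‖k‖ ^ 2) ^ 2 + ε ^ 2))
        (𝓝[>] (0 : ℝ)) (𝓝 (π / (2 * ‖k‖) * L)) := by
  have : Nontrivial (EuclideanSpace ℝ (Fin d)) :=
    Module.nontrivial_of_finrank_pos (R := ℝ) (by rw [finrank_euclideanSpace_fin]; omega)
  have hR : 0 < ‖k‖ := norm_pos_iff.2 hk
  set F := fun z => f (z - k)
  have hFc : Continuous F := by fun_prop
  have hFs : HasCompactSupport F := hsupp.comp_homeomorph (Homeomorph.subRight k)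
  have hfF : ∀ y, f y = F (y + k) := fun y => by simp [F]
  set ρ := radialDensity volume F
  have hρc : Continuous ρ := continuous_radialDensity volume hFc
  have hρi : Integrable ρ :=
    hρc.integrable_of_hasCompactSupport (hasCompactSupport_radialDensity volume hFs)
  refine ⟨ρ ‖k‖, ?_, ?_⟩
  · refine (tendsto_inv_two_mul_smul_setIntegral_Icc (hρc.stronglyMeasurableAtFilter _ _)
      hρc.continuousAt).congr' ?_
    filter_upwards [Ioo_mem_nhdsGT hR] with δ hδ
    have hshell : {y | ‖k‖ - δ ≤ ‖y + k‖ ∧ ‖y + k‖ ≤ ‖k‖ + δ}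
        = (· + k) ⁻¹' (norm ⁻¹' Icc (‖k‖ - δ) (‖k‖ + δ)) := rfl
    rw [hshell, integral_congr_ae (Eventually.of_forall hfF),
      (measurePreserving_add_right volume k).setIntegral_preimage_emb
        (measurableEmbedding_addRight k) F,
      setIntegral_preimage_norm_eq_setIntegral_radialDensity volume
        (hFc.integrable_of_hasCompactSupport hFs) measurableSet_Icc
        fun r hr => lt_of_lt_of_le (sub_pos.2 hδ.2) hr.1, smul_eq_mul]
  · refine (tendsto_setIntegral_Ioi_lorentzian_sq_sub_smul hR hρi.integrableOn
      hρc.continuousAt).congr' ?_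
    filter_upwards [self_mem_nhdsWithin] with ε (hε : 0 < ε)
    set K := fun r : ℝ => ε / ((r ^ 2 - ‖k‖ ^ 2) ^ 2 + ε ^ 2)
    have hK : Continuous K := continuous_const.div (by fun_prop) fun r => by positivity
    calc ∫ r in Ioi 0, K r • ρ r = ∫ z, K ‖z‖ • F z :=
          (integral_norm_smul_eq_integral_radialDensity volume K
            (((hK.comp continuous_norm).smul hFc).integrable_of_hasCompactSupport
              hFs.smul_left)).symm
      _ = ∫ y, K ‖y + k‖ • F (y + k) := (integral_add_right_eq_self _ k).symm
      _ = _ := by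
          congr with y
          rw [hfF y, smul_eq_mul, mul_div_right_comm]
end

section
/- Let a > 0 and let g : ℝ → ℝ be continuous, bounded, and Lebesgue integrable. Then ∫_ℝ ε·g(r) / ((r² − a²)² + ε²) dr converges, as ε → 0⁺, to (π/(2a))·(g(a) + g(−a)). -/
/-!
Folding `r ↦ -r` onto `(0, ∞)` and substituting `u = r² - a²` turns the integral into
`∫ ε / (u² + ε²) · h u du`, where `h u = G(√(u + a²)) / (2√(u + a²))` on `(-a², ∞)` (and `0`
elsewhere) is the density of the pushforward of `G(r) dr`, `G(r) = g(r) + g(-r)`. Since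
`ε / (π (u² + ε²))` is an approximate identity, the limit is `π h 0 = π (g a + g (-a)) / (2a)`.
-/

open MeasureTheory Filter Topology Real Set

variable {E : Type*} [NormedAddCommGroup E] [NormedSpace ℝ E]

theorem integral_eq_integral_Ioi_add_comp_neg {f : ℝ → E} (hf : Integrable f) :
    ∫ x, f x = ∫ x in Ioi 0, (f x + f (-x)) := by
  rw [integral_add hf.integrableOn hf.comp_neg.integrableOn, integral_comp_neg_Ioi, neg_zero,
    add_comm, intervalIntegral.integral_Iic_add_Ioi hf.integrableOn hf.integrableOn]

section SqSub

variable (b : ℝ)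

theorem image_sq_sub_Ioi_zero : (fun r : ℝ => r ^ 2 - b) '' Ioi 0 = Ioi (-b) := by
  ext u
  constructor
  · rintro ⟨r, hr, rfl⟩
    have : 0 < r ^ 2 := pow_pos hr 2
    simp only [mem_Ioi]; linarith
  · intro hu
    have hub : 0 < u + b := by simp only [mem_Ioi] at hu; linarith
    exact ⟨√(u + b), Real.sqrt_pos.2 hub, by simp [Real.sq_sqrt hub.le]⟩

theorem hasDerivWithinAt_sq_sub (r : ℝ) (s : Set ℝ) :
    HasDerivWithinAt (fun r : ℝ => r ^ 2 - b) (2 * r) s r := by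
  simpa using ((hasDerivAt_pow 2 r).sub_const b).hasDerivWithinAt

theorem injOn_sq_sub_Ioi_zero : InjOn (fun r : ℝ => r ^ 2 - b) (Ioi 0) :=
  fun r (hr : 0 < r) s (hs : 0 < s) hrs => (sq_eq_sq₀ hr.le hs.le).1 (sub_left_inj.1 hrs)

theorem eqOn_abs_two_mul_smul_comp_sqrt_add (F : ℝ → E) :
    EqOn (fun r => |2 * r| • (2 * √(r ^ 2 - b + b))⁻¹ • F √(r ^ 2 - b + b)) F (Ioi 0) :=
  fun r (hr : 0 < r) => by
    dsimp only
    rw [sub_add_cancel, Real.sqrt_sq hr.le, abs_of_pos (by positivity : 0 < 2 * r), smul_smul,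
      mul_inv_cancel₀ (by positivity), one_smul]

theorem integrableOn_Ioi_comp_sqrt_add_iff (F : ℝ → E) :
    IntegrableOn (fun u => (2 * √(u + b))⁻¹ • F √(u + b)) (Ioi (-b)) ↔
      IntegrableOn F (Ioi 0) := by
  rw [← image_sq_sub_Ioi_zero,
    integrableOn_image_iff_integrableOn_abs_deriv_smul measurableSet_Ioi
      (fun r _ => hasDerivWithinAt_sq_sub b r _) (injOn_sq_sub_Ioi_zero b)]
  exact integrableOn_congr_fun (eqOn_abs_two_mul_smul_comp_sqrt_add b F) measurableSet_Ioi

theorem integral_Ioi_comp_sqrt_add (F : ℝ → E) :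
    ∫ u in Ioi (-b), (2 * √(u + b))⁻¹ • F √(u + b) = ∫ r in Ioi 0, F r := by
  rw [← image_sq_sub_Ioi_zero, integral_image_eq_integral_abs_deriv_smul measurableSet_Ioi
    (fun r _ => hasDerivWithinAt_sq_sub b r _) (injOn_sq_sub_Ioi_zero b)]
  exact setIntegral_congr_fun measurableSet_Ioi (eqOn_abs_two_mul_smul_comp_sqrt_add b F)

end SqSub

theorem tendsto_norm_mul_inv_one_add_sq :
    Tendsto (fun x : ℝ => ‖x‖ * (1 + x ^ 2)⁻¹) (Bornology.cobounded ℝ) (𝓝 0) := by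
  refine squeeze_zero' (Eventually.of_forall fun x => by positivity) ?_
    tendsto_norm_cobounded_atTop.inv_tendsto_atTop
  filter_upwards [tendsto_norm_cobounded_atTop.eventually_gt_atTop 0] with x hx
  simp only [Pi.inv_apply, Real.norm_eq_abs] at hx ⊢
  rw [← div_eq_mul_inv, div_le_iff₀ (by positivity), inv_mul_eq_div, le_div_iff₀ hx]
  nlinarith [sq_abs x]

theorem tendsto_integral_div_sq_add_sq_smul [CompleteSpace E] {h : ℝ → E} (hh : Integrable h)
    (h0 : ContinuousAt h 0) :
    Tendsto (fun ε : ℝ => ∫ u, (ε / (u ^ 2 + ε ^ 2)) • h u) (𝓝[>] 0) (𝓝 (π • h 0)) := by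
  have peak := tendsto_integral_comp_smul_smul_of_integrable (μ := volume)
    (φ := fun x : ℝ => π⁻¹ * (1 + x ^ 2)⁻¹) (fun x => by positivity)
    (by rw [integral_const_mul, integral_univ_inv_one_add_sq, inv_mul_cancel₀ pi_ne_zero])
    (by simpa [mul_left_comm] using tendsto_norm_mul_inv_one_add_sq.const_mul π⁻¹) hh h0
  refine ((peak.comp tendsto_inv_nhdsGT_zero).const_smul π).congr' ?_
  filter_upwards [self_mem_nhdsWithin] with ε (hε : 0 < ε)
  rw [Function.comp_apply, ← integral_smul]
  congr 1 with u
  rw [smul_smul, Module.finrank_self, pow_one, smul_eq_mul]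
  congr 1
  field_simp
  ring

theorem integrable_mul_div_sq_sub_sq_add_sq (a : ℝ) {ε : ℝ} (hε : 0 < ε) {g : ℝ → ℝ}
    (hg : Integrable g) : Integrable fun r => ε * g r / ((r ^ 2 - a ^ 2) ^ 2 + ε ^ 2) := by
  have hbound : ∀ r : ℝ, ‖ε / ((r ^ 2 - a ^ 2) ^ 2 + ε ^ 2)‖ ≤ ε⁻¹ := fun r => by
    rw [Real.norm_of_nonneg (by positivity), div_le_iff₀ (by positivity), inv_mul_eq_div,
      le_div_iff₀ hε]
    nlinarith [sq_nonneg (r ^ 2 - a ^ 2)]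
  have hmeas : Measurable fun r : ℝ => ε / ((r ^ 2 - a ^ 2) ^ 2 + ε ^ 2) := by fun_prop
  refine (hg.bdd_mul hmeas.aestronglyMeasurable (Eventually.of_forall hbound)).congr
    (Eventually.of_forall fun r => ?_)
  simp only
  ring

theorem integral_mul_div_sq_sub_sq_add_sq_eq_integral_Ioi (a : ℝ) {ε : ℝ} (hε : 0 < ε)
    {g : ℝ → ℝ} (hg : Integrable g) :
    ∫ r, ε * g r / ((r ^ 2 - a ^ 2) ^ 2 + ε ^ 2) = ∫ u in Ioi (-a ^ 2),
      ε / (u ^ 2 + ε ^ 2) * ((2 * √(u + a ^ 2))⁻¹ * (g √(u + a ^ 2) + g (-√(u + a ^ 2)))) := by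
  rw [integral_eq_integral_Ioi_add_comp_neg (integrable_mul_div_sq_sub_sq_add_sq a hε hg),
    ← integral_Ioi_comp_sqrt_add]
  refine setIntegral_congr_fun measurableSet_Ioi (fun u (hu : -a ^ 2 < u) => ?_)
  have hsq : √(u + a ^ 2) ^ 2 - a ^ 2 = u := by
    rw [Real.sq_sqrt (by linarith), add_sub_cancel_right]
  simp only [smul_eq_mul, neg_sq, hsq]
  ring

theorem stmt_6_general (a : ℝ) (ha : 0 < a) (g : ℝ → ℝ) (hg : Continuous g)
    (hint : Integrable g (volume : Measure ℝ)) :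
    Tendsto (fun ε : ℝ => ∫ r : ℝ, ε * g r / ((r ^ 2 - a ^ 2) ^ 2 + ε ^ 2))
      (𝓝[>] (0 : ℝ)) (𝓝 (π / (2 * a) * (g a + g (-a)))) := by
  set G : ℝ → ℝ := fun r => g r + g (-r)
  set h : ℝ → ℝ := fun u => (2 * √(u + a ^ 2))⁻¹ * G √(u + a ^ 2)
  have h0mem : (0 : ℝ) ∈ Ioi (-a ^ 2) := neg_lt_zero.2 (pow_pos ha 2)
  have hh : IntegrableOn h (Ioi (-a ^ 2)) :=
    (integrableOn_Ioi_comp_sqrt_add_iff _ G).2 (hint.add hint.comp_neg).integrableOn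
  have h0 : ContinuousAt ((Ioi (-a ^ 2)).indicator h) 0 := by
    have : ContinuousAt h 0 := by
      have : 2 * √(0 + a ^ 2) ≠ 0 := by positivity
      fun_prop (disch := assumption)
    refine this.congr ?_
    filter_upwards [Ioi_mem_nhds h0mem] with u hu
    exact (indicator_of_mem hu h).symm
  have hval : π • (Ioi (-a ^ 2)).indicator h 0 = π / (2 * a) * (g a + g (-a)) := by
    rw [indicator_of_mem h0mem, smul_eq_mul]
    simp only [h, G, zero_add, Real.sqrt_sq ha.le]
    field_simp
  rw [← hval]
  refine (tendsto_integral_div_sq_add_sq_smul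
    ((integrable_indicator_iff measurableSet_Ioi).2 hh) h0).congr' ?_
  filter_upwards [self_mem_nhdsWithin] with ε (hε : 0 < ε)
  rw [integral_mul_div_sq_sub_sq_add_sq_eq_integral_Ioi a hε hint,
    ← integral_indicator measurableSet_Ioi]
  congr 1 with u
  exact ((Ioi (-a ^ 2)).indicator_mul_right (fun u => ε / (u ^ 2 + ε ^ 2)) h).symm

/-- One-dimensional concentration computation behind Fermi's golden rule:
`∫ ε g(r) / ((r²-a²)² + ε²) dr → (π/(2a)) (g(a) + g(-a))` as `ε → 0⁺`. -/
theorem stmt_6 (a : ℝ) (ha : 0 < a) (g : ℝ → ℝ) (hg : Continuous g)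
    (hb : ∃ M : ℝ, ∀ r : ℝ, |g r| ≤ M) (hint : Integrable g (volume : Measure ℝ)) :
    Tendsto (fun ε : ℝ => ∫ r : ℝ, ε * g r / ((r ^ 2 - a ^ 2) ^ 2 + ε ^ 2))
      (𝓝[>] (0 : ℝ)) (𝓝 (π / (2 * a) * (g a + g (-a)))) :=
  stmt_6_general a ha g hg hint
end

section
/- For every z = (z₁,…,z_p) ∈ ℝ^p, the function f : ℝ → ℝ defined by f(s) := m̃_p(z₁+s, …, z_p+s) is differentiable on ℝ and satisfies 1 ≤ f′(s) ≤ 3 for every s ∈ ℝ. -/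
open Classical in
/-- The regularized max-min function `m̃_p`: with `M(z) = max_j z_j` and `m(z) = min_j z_j`,
`m̃_p(z) = ½(M+m) + ½(M−m)·χ((M+m)/(M−m))` when `M > m`, and `m̃_p(z) = z₁` when all
coordinates are equal. -/
noncomputable def mtilde {p : ℕ} (χ : ℝ → ℝ) (z : Fin p → ℝ) : ℝ :=
  if (⨆ j, z j) = (⨅ j, z j) then (⨆ j, z j)
  else ((⨆ j, z j) + (⨅ j, z j)) / 2 +
    ((⨆ j, z j) - (⨅ j, z j)) / 2 *
      χ (((⨆ j, z j) + (⨅ j, z j)) / ((⨆ j, z j) - (⨅ j, z j)))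

/-! A diagonal shift `z ↦ z + s` moves `M` and `m` by `s`, so it leaves `M - m` fixed and the
argument `(M + m + 2s)/(M - m)` of `χ` has slope `2/(M - m)`; the prefactor `(M - m)/2` cancels
this, and the derivative of `m̃_p` along the diagonal is `1 + χ'(·)`, or `1` when `M = m`.
The bounds `0 ≤ χ' ≤ 2` then give the claim. -/

section FiniteShift

variable {ι : Type*} [Finite ι] [Nonempty ι]

lemma Real.ciSup_add_const (z : ι → ℝ) (s : ℝ) : ⨆ j, (z j + s) = (⨆ j, z j) + s :=
  ((OrderIso.addRight s).map_ciSup (Set.finite_range z).bddAbove).symm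

lemma Real.ciInf_add_const (z : ι → ℝ) (s : ℝ) : ⨅ j, (z j + s) = (⨅ j, z j) + s :=
  ((OrderIso.addRight s).map_ciInf (Set.finite_range z).bddBelow).symm

end FiniteShift

lemma hasDerivAt_half_add_mul_comp_div {χ : ℝ → ℝ} {a : ℝ} (b s : ℝ) (ha : a ≠ 0)
    (hχ : DifferentiableAt ℝ χ ((b + 2 * s) / a)) :
    HasDerivAt (fun s => (b + 2 * s) / 2 + a / 2 * χ ((b + 2 * s) / a))
      (1 + deriv χ ((b + 2 * s) / a)) s := by
  have hlin : ∀ c : ℝ, HasDerivAt (fun s : ℝ => (b + 2 * s) / c) (2 / c) s := fun c => by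
    simpa using (((hasDerivAt_id s).const_mul 2).const_add b).div_const c
  have hcomp := hχ.hasDerivAt.comp s (hlin a)
  refine ((hlin 2).add (hcomp.const_mul (a / 2))).congr_deriv ?_
  field_simp

lemma hasDerivAt_mtilde_add_const {p : ℕ} [Nonempty (Fin p)] {χ : ℝ → ℝ}
    (hχ : Differentiable ℝ χ) (z : Fin p → ℝ) (s : ℝ) :
    ∃ d, HasDerivAt (fun s => mtilde χ (fun j => z j + s)) d s ∧
      (d = 1 ∨ ∃ t, d = 1 + deriv χ t) := by
  set M := ⨆ j, z j
  set m := ⨅ j, z j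
  have hshift : ∀ s, (⨆ j, (z j + s)) = M + s ∧ (⨅ j, (z j + s)) = m + s := fun s =>
    ⟨Real.ciSup_add_const z s, Real.ciInf_add_const z s⟩
  by_cases hMm : M = m
  · have hf : (fun s => mtilde χ (fun j => z j + s)) = fun s => M + s := by
      funext s
      simp [mtilde, hshift, hMm]
    exact ⟨1, hf ▸ (hasDerivAt_id s).const_add M, Or.inl rfl⟩
  · have hf : (fun s => mtilde χ (fun j => z j + s)) =
        fun s => (M + m + 2 * s) / 2 + (M - m) / 2 * χ ((M + m + 2 * s) / (M - m)) := by
      funext s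
      have hne : M + s ≠ m + s := by simpa using hMm
      simp only [mtilde, hshift, if_neg hne]
      ring_nf
    exact ⟨_, hf ▸ hasDerivAt_half_add_mul_comp_div _ s (sub_ne_zero.mpr hMm) (hχ _),
      Or.inr ⟨_, rfl⟩⟩

theorem stmt_7_general (p : ℕ) (hp : 1 ≤ p) (χ : ℝ → ℝ)
    (hχdiff : Differentiable ℝ χ)
    (hχ'nonneg : ∀ s : ℝ, 0 ≤ deriv χ s) (hχ'le : ∀ s : ℝ, deriv χ s ≤ 2)
    (z : Fin p → ℝ) :
    Differentiable ℝ (fun s : ℝ => mtilde χ (fun j => z j + s)) ∧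
    ∀ s : ℝ, 1 ≤ deriv (fun s : ℝ => mtilde χ (fun j => z j + s)) s ∧
      deriv (fun s : ℝ => mtilde χ (fun j => z j + s)) s ≤ 3 := by
  have : Nonempty (Fin p) := Fin.pos_iff_nonempty.mp hp
  choose d hd hd_cases using hasDerivAt_mtilde_add_const hχdiff z
  refine ⟨fun s => (hd s).differentiableAt, fun s => ?_⟩
  rw [(hd s).deriv]
  rcases hd_cases s with h | ⟨t, h⟩
  · norm_num [h]
  · exact h ▸ ⟨by linarith [hχ'nonneg t], by linarith [hχ'le t]⟩

/-- Along diagonal shifts, `s ↦ m̃_p(z₁+s, …, z_p+s)` is differentiable with derivative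
in `[1, 3]`. -/
theorem stmt_7 (p : ℕ) (hp : 1 ≤ p) (χ : ℝ → ℝ)
    (hχodd : ∀ s : ℝ, χ (-s) = -χ s) (hχdiff : Differentiable ℝ χ)
    (hχm : ∀ s : ℝ, s ≤ -1 → χ s = -1) (hχp : ∀ s : ℝ, 1 ≤ s → χ s = 1)
    (hχ'nonneg : ∀ s : ℝ, 0 ≤ deriv χ s) (hχ'le : ∀ s : ℝ, deriv χ s ≤ 2)
    (hχle : ∀ s : ℝ, -1 ≤ s → s ≤ 0 → χ s ≤ s)
    (hχge : ∀ s : ℝ, 0 ≤ s → s ≤ 1 → s ≤ χ s)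
    (z : Fin p → ℝ) :
    Differentiable ℝ (fun s : ℝ => mtilde χ (fun j => z j + s)) ∧
    ∀ s : ℝ, 1 ≤ deriv (fun s : ℝ => mtilde χ (fun j => z j + s)) s ∧
      deriv (fun s : ℝ => mtilde χ (fun j => z j + s)) s ≤ 3 :=
  stmt_7_general p hp χ hχdiff hχ'nonneg hχ'le z
end
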